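/- arXiv:2503.21108 — 8 statements merged into one kernel-verified Lean document; each statement's English description precedes it below -/
import Mathlib

section
/- Let s ∈ X. Then ⟨1, N^s⟩_G = (1/|G|) Σ_{g∈G} N^s(g) equals 1 if s^T lies in the same (G×G)-orbit as s, and equals 0 otherwise. -/
/-!
With `K = {(a, b) | a s b = s}`, the map `(a, b) ↦ a s b` covers each point of the orbit of `s`
exactly `|K|` times. Hence `|K| ∑_g N^s(g)` counts the triples `(g, a, b)` with
`g (a s b)ᵀ = a s b`. As `(a s b)ᵀ = b⁻¹ sᵀ a⁻¹`, this condition reads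
`sᵀ = (b g⁻¹ a) s (b a)`, and the substitution `(g, a, b) ↦ (b g⁻¹ a, b a, a)` shows that there
are `|G| · #{(c, d) | c s d = sᵀ}` such triples. The last count is `|K|` if `sᵀ` lies in the
orbit of `s` and `0` otherwise.
-/

open Finset
open scoped RightActions

namespace TwoSidedAction

variable {G X : Type*} [Group G]

lemma card_filter_mul_inv_mul [Fintype G] (P : G → Prop) [DecidablePred P] (a b : G) :
    #{g : G | P (b * g⁻¹ * a)} = #{c : G | P c} :=
  card_equiv (((Equiv.inv G).trans (Equiv.mulLeft b)).trans (Equiv.mulRight a)) fun g ↦ by simp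

variable [MulAction G X] [MulAction Gᵐᵒᵖ X]

variable (G) in
def twoSidedOrbit [Fintype G] [DecidableEq X] (s : X) : Finset X :=
  univ.image fun p : G × G ↦ p.1 •> s <• p.2

lemma mem_twoSidedOrbit [Fintype G] [DecidableEq X] {s x : X} :
    x ∈ twoSidedOrbit G s ↔ ∃ a b : G, x = a •> s <• b := by
  simp [twoSidedOrbit, eq_comm]

variable [SMulCommClass G Gᵐᵒᵖ X]

lemma smul_smul_op_smul (x : X) (a c d : G) : a •> (c •> x <• d) = (a * c) •> x <• d := by
  rw [smul_comm, smul_smul]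

lemma smul_op_smul_eq_iff {x y : X} {a b : G} :
    a •> x <• b = y ↔ x = a⁻¹ •> y <• b⁻¹ := by
  constructor
  · rintro rfl
    rw [smul_smul_op_smul, op_smul_op_smul, inv_mul_cancel, mul_inv_cancel, one_smul,
      MulOpposite.op_one, one_smul]
  · rintro rfl
    rw [smul_smul_op_smul, op_smul_op_smul, mul_inv_cancel, inv_mul_cancel, one_smul,
      MulOpposite.op_one, one_smul]

lemma smul_transpose_eq_iff (T : X → X)
    (hT : ∀ (g : G) (x : X) (h : G), T (g •> x <• h) = h⁻¹ •> T x <• g⁻¹)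
    (s : X) (g a b : G) :
    g • T (a •> s <• b) = a •> s <• b ↔ T s = (b * g⁻¹ * a) •> s <• (b * a) := by
  rw [hT, smul_smul_op_smul, smul_op_smul_eq_iff, smul_smul_op_smul, op_smul_op_smul]
  simp only [mul_inv_rev, inv_inv]

section Counting

variable [Fintype G] [DecidableEq X]

lemma card_filter_smul_op_smul_eq_smul_op_smul (s : X) (a b : G) :
    #{p : G × G | p.1 •> s <• p.2 = a •> s <• b} = #{p : G × G | p.1 •> s <• p.2 = s} := by
  refine card_equiv ((Equiv.mulLeft a⁻¹).prodCongr (Equiv.mulRight b⁻¹)) fun p ↦ ?_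
  simp only [mem_filter_univ, Equiv.prodCongr_apply, Prod.map_fst, Prod.map_snd,
    Equiv.coe_mulLeft, Equiv.coe_mulRight]
  rw [← op_smul_op_smul, ← smul_smul_op_smul, smul_op_smul_eq_iff (a := a⁻¹), inv_inv, inv_inv,
    eq_comm]

lemma card_filter_smul_op_smul_eq (s y : X) :
    #{p : G × G | p.1 •> s <• p.2 = y} =
      if ∃ a b : G, y = a •> s <• b then #{p : G × G | p.1 •> s <• p.2 = s} else 0 := by
  split_ifs with hy
  · obtain ⟨a, b, rfl⟩ := hy
    exact card_filter_smul_op_smul_eq_smul_op_smul s a b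
  · refine card_eq_zero.2 <| filter_eq_empty_iff.2 fun p _ hp ↦ hy ⟨p.1, p.2, hp.symm⟩

lemma sum_comp_smul_op_smul {M : Type*} [AddCommMonoid M] (f : X → M) (s : X) :
    ∑ p : G × G, f (p.1 •> s <• p.2) =
      #{p : G × G | p.1 •> s <• p.2 = s} • ∑ x ∈ twoSidedOrbit G s, f x := by
  rw [sum_comp, smul_sum]
  refine sum_congr rfl fun x hx ↦ ?_
  obtain ⟨⟨a, b⟩, -, rfl⟩ := mem_image.1 hx
  rw [card_filter_smul_op_smul_eq_smul_op_smul]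

theorem sum_card_filter_smul_transpose_eq (T : X → X)
    (hT : ∀ (g : G) (x : X) (h : G), T (g •> x <• h) = h⁻¹ •> T x <• g⁻¹) (s : X) :
    ∑ g : G, #{x ∈ twoSidedOrbit G s | g • T x = x} =
      if ∃ a b : G, T s = a •> s <• b then Fintype.card G else 0 := by
  set K := #{p : G × G | p.1 •> s <• p.2 = s}
  have hK : 0 < K := card_pos.2 ⟨1, by simp⟩
  have hsum : K * ∑ g : G, #{x ∈ twoSidedOrbit G s | g • T x = x} =
      Fintype.card G * #{p : G × G | p.1 •> s <• p.2 = T s} := calc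
    _ = K • ∑ x ∈ twoSidedOrbit G s, #{g : G | g • T x = x} := by
      rw [smul_eq_mul]
      congr 1
      simp only [card_filter]
      rw [sum_comm]
    _ = ∑ p : G × G, #{g : G | T s = (p.2 * g⁻¹ * p.1) •> s <• (p.2 * p.1)} := by
      rw [← sum_comp_smul_op_smul]
      simp_rw [smul_transpose_eq_iff T hT]
    _ = ∑ p : G × G, #{c : G | T s = c •> s <• (p.2 * p.1)} :=
      sum_congr rfl fun p _ ↦ card_filter_mul_inv_mul (fun c ↦ T s = c •> s <• (p.2 * p.1)) _ _
    _ = ∑ _a : G, ∑ d : G, #{c : G | T s = c •> s <• d} := by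
      rw [Fintype.sum_prod_type]
      exact sum_congr rfl fun a _ ↦
        Equiv.sum_comp (Equiv.mulRight a) fun d ↦ #{c : G | T s = c •> s <• d}
    _ = Fintype.card G * #{p : G × G | p.1 •> s <• p.2 = T s} := by
      simp only [sum_const, card_univ, smul_eq_mul, card_filter, Fintype.sum_prod_type, eq_comm]
      rw [sum_comm]
  rw [card_filter_smul_op_smul_eq] at hsum
  refine Nat.eq_of_mul_eq_mul_left hK ?_
  split_ifs at hsum ⊢
  · rw [hsum, mul_comm]
  · rw [hsum, mul_zero, mul_zero]

theorem sum_natCard_fixed_smul_transpose (T : X → X)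
    (hT : ∀ (g : G) (x : X) (h : G), T (g •> x <• h) = h⁻¹ •> T x <• g⁻¹) (s : X) :
    ∑ g : G, Nat.card {x : X // (∃ a b : G, x = a •> s <• b) ∧ g • T x = x} =
      if ∃ a b : G, T s = a •> s <• b then Fintype.card G else 0 := by
  rw [← sum_card_filter_smul_transpose_eq T hT s]
  refine sum_congr rfl fun g _ ↦ ?_
  rw [← Nat.card_eq_finsetCard]
  exact Nat.card_congr <| Equiv.subtypeEquivRight fun x ↦ by simp [mem_twoSidedOrbit]

end Counting

end TwoSidedAction

open scoped Classical

theorem stmt1_general {G X : Type*} [Group G] [Fintype G]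
    (l : G → X → X) (r : X → G → X) (T : X → X)
    (hl1 : ∀ x, l 1 x = x) (hlm : ∀ g g' x, l (g * g') x = l g (l g' x))
    (hr1 : ∀ x, r x 1 = x) (hrm : ∀ x g g', r x (g * g') = r (r x g) g')
    (hc : ∀ g x h, l g (r x h) = r (l g x) h)
    (hTc : ∀ g x h, T (l g (r x h)) = l h⁻¹ (r (T x) g⁻¹))
    (s : X) :
    (Fintype.card G : ℚ)⁻¹ *
        ∑ g : G, (Nat.card {x : X // (∃ a b : G, x = l a (r s b)) ∧ l g (T x) = x} : ℚ) =
      if ∃ a b : G, T s = l a (r s b) then 1 else 0 := by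
  let _ : MulAction G X := { smul := l, one_smul := hl1, mul_smul := hlm }
  let _ : MulAction Gᵐᵒᵖ X :=
    { smul := fun g x ↦ r x g.unop, one_smul := hr1, mul_smul := fun g g' x ↦ hrm x g'.unop g.unop }
  have _ : SMulCommClass G Gᵐᵒᵖ X := ⟨fun a b x ↦ hc a x b.unop⟩
  have hcount : ∑ g : G, Nat.card {x : X // (∃ a b : G, x = r (l a s) b) ∧ l g (T x) = x} =
      if ∃ a b : G, T s = r (l a s) b then Fintype.card G else 0 :=
    TwoSidedAction.sum_natCard_fixed_smul_transpose T
      (fun g x h ↦ show T (r (l g x) h) = r (l h⁻¹ (T x)) g⁻¹ by rw [← hc, hTc, hc]) s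
  -- `a •> s <• b` unfolds to `r (l a s) b`, not to `l a (r s b)`
  simp only [hc]
  rw [← Nat.cast_sum, hcount]
  split_ifs <;> simp

/-- For `s ∈ X`, the average over `G` of `N^s(g) = #{x in the (G×G)-orbit of s
| g • x^T = x}` equals `1` if `s^T` lies in the (G×G)-orbit of `s` and `0` otherwise. -/
theorem stmt1 {G X : Type*} [Group G] [Fintype G] [Fintype X]
    (l : G → X → X) (r : X → G → X) (T : X → X)
    (hl1 : ∀ x, l 1 x = x) (hlm : ∀ g g' x, l (g * g') x = l g (l g' x))
    (hr1 : ∀ x, r x 1 = x) (hrm : ∀ x g g', r x (g * g') = r (r x g) g')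
    (hc : ∀ g x h, l g (r x h) = r (l g x) h)
    (hT : ∀ x, T (T x) = x)
    (hTc : ∀ g x h, T (l g (r x h)) = l h⁻¹ (r (T x) g⁻¹))
    (s : X) :
    (Fintype.card G : ℚ)⁻¹ *
        ∑ g : G, (Nat.card {x : X // (∃ a b : G, x = l a (r s b)) ∧ l g (T x) = x} : ℚ) =
      if ∃ a b : G, T s = l a (r s b) then 1 else 0 :=
  stmt1_general l r T hl1 hlm hr1 hrm hc hTc s
end

section
/- Fix σ ∈ S_n and let F map τ ∈ {τ ∈ S_{nm} : τ²σ⁻¹ ∈ S_m^n} to the n×n matrix with entries F(τ)_{ij} = #(P_i ∩ τ(P_j)). Then F takes values in {A ∈ M(n,m) : σ·A^T = A}, is surjective onto this set, and every fiber of F has exactly (m!)^n elements. -/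
open Matrix

/-- The index of the block `P_i = {(i-1)m+1, ..., im}` (in 0-indexed terms, the block
`{im, ..., im+m-1}`) containing `k ∈ {1, ..., nm}`. -/
def blk {n m : ℕ} (hm : 0 < m) (k : Fin (n * m)) : Fin n :=
  ⟨(k : ℕ) / m, (Nat.div_lt_iff_lt_mul hm).mpr k.isLt⟩

/-- The matrix `F(τ)` with entries `F(τ)_{ij} = #(P_i ∩ τ(P_j))`. -/
noncomputable def Fmap {n m : ℕ} (hm : 0 < m) (τ : Equiv.Perm (Fin (n * m))) :
    Matrix (Fin n) (Fin n) ℕ :=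
  fun i j => Nat.card {k : Fin (n * m) // blk hm k = i ∧ blk hm (τ.symm k) = j}

/-!
Work with an arbitrary partition `π : X → ι` of a finite set into blocks of size `m`, and
write `f = π ∘ τ`. The condition `π ∘ τ² = σ ∘ π` says exactly that `τ` maps
`{x | σ (π x) = k ∧ f x = l}` bijectively onto `{y | f y = k ∧ π y = l}`, and
`F(τ) = A` says that the latter set has `A k l` elements. Hence, for each admissible `f`,
the number of `τ` is the number of bijections `e : X ≃ Σ (k, l), Fin (A k l)` with
`(e x).1 = (σ (π x), f x)`; for `f` that are not admissible there are no such `e`, because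
`A` is `σ`-symmetric. Summing over `f`, the bijections `e` are those sending the block
`π⁻¹ (σ⁻¹ k)` onto the `k`-th row of `Σ (k, l), Fin (A k l)`; both have `m` elements, so
there are `(m!)^n` of them.
-/

open Equiv

section Fiberwise

variable {α β γ δ : Type*}

def equivFiberwise (φ : α → γ) (ψ : β → γ) :
    {e : α ≃ β // ∀ a, ψ (e a) = φ a} ≃ ∀ c, ({a // φ a = c} ≃ {b // ψ b = c}) where
  toFun e c := e.1.subtypeEquiv fun a => by rw [e.2]
  invFun g := ⟨ofFiberEquiv g, ofFiberEquiv_map g⟩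
  left_inv e := by ext a; rfl
  right_inv g := by
    funext c
    ext ⟨a, rfl⟩
    rfl

theorem card_equiv_fiberwise [Finite α] [Finite β] [Fintype γ] (φ : α → γ) (ψ : β → γ) :
    Nat.card {e : α ≃ β // ∀ a, ψ (e a) = φ a} =
      ∏ c, Nat.card ({a // φ a = c} ≃ {b // ψ b = c}) := by
  rw [Nat.card_congr (equivFiberwise φ ψ), Nat.card_pi]

theorem card_equiv_congr_right {β' : Type*} [Finite α] [Finite β] [Finite β']
    (h : Nat.card β = Nat.card β') : Nat.card (α ≃ β) = Nat.card (α ≃ β') :=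
  Nat.card_congr ((Equiv.refl α).equivCongr (Finite.card_eq.mp h).some)

theorem card_subtype_eq_sum_card_fiber [Finite α] [Fintype γ] (p : α → Prop) (g : α → γ) :
    Nat.card {a // p a} = ∑ c, Nat.card {a // p a ∧ g a = c} := by
  rw [← Nat.card_sigma]
  exact Nat.card_congr
    { toFun a := ⟨g a, a, a.2, rfl⟩
      invFun s := ⟨s.2, s.2.2.1⟩
      left_inv _ := rfl
      right_inv := by rintro ⟨_, a, h, rfl⟩; rfl }

theorem card_equiv_fst_eq_sum [Fintype α] [DecidableEq α] [Finite β] [Fintype δ]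
    (ψ : β → γ × δ) (g : α → γ) :
    Nat.card {e : α ≃ β // ∀ a, (ψ (e a)).1 = g a} =
      ∑ f : α → δ, Nat.card {e : α ≃ β // ∀ a, ψ (e a) = (g a, f a)} := by
  rw [card_subtype_eq_sum_card_fiber _ fun (e : α ≃ β) a => (ψ (e a)).2]
  refine Fintype.sum_congr _ _ fun f => Nat.card_congr (subtypeEquivRight fun e => ?_)
  simp only [funext_iff, Prod.ext_iff, forall_and]

end Fiberwise

section BlockMatrix

variable {X ι : Type*} (π : X → ι)

noncomputable def blockMatrix (τ : Perm X) : Matrix ι ι ℕ :=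
  fun i j => Nat.card {x // π x = i ∧ π (τ.symm x) = j}

variable {π}

theorem blockMatrix_apply_eq_card (τ : Perm X) (i j : ι) :
    blockMatrix π τ i j = Nat.card {x // π (τ x) = i ∧ π x = j} :=
  (Nat.card_congr (τ.subtypeEquiv fun x => by simp)).symm

theorem sum_blockMatrix_row [Finite X] [Fintype ι] (τ : Perm X) (i : ι) :
    ∑ j, blockMatrix π τ i j = Nat.card {x // π x = i} :=
  (card_subtype_eq_sum_card_fiber _ _).symm

theorem sum_blockMatrix_col [Finite X] [Fintype ι] (τ : Perm X) (j : ι) :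
    ∑ i, blockMatrix π τ i j = Nat.card {x // π x = j} := by
  simp_rw [blockMatrix_apply_eq_card, and_comm (a := π (τ _) = _)]
  exact (card_subtype_eq_sum_card_fiber _ _).symm

theorem blockMatrix_apply_inv {σ : Perm ι} {τ : Perm X} (hτ : ∀ x, π (τ (τ x)) = σ (π x))
    (i j : ι) : blockMatrix π τ j (σ⁻¹ i) = blockMatrix π τ i j := by
  have hτ' (y : X) : π (τ y) = σ (π (τ.symm y)) := by simpa using hτ (τ.symm y)
  refine Nat.card_congr (τ.subtypeEquiv fun x => ?_)
  rw [τ.symm_apply_apply, hτ' x, Perm.eq_inv_iff_eq, and_comm]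

end BlockMatrix

section Count

variable {X ι : Type*} [Fintype X] [Fintype ι] {π : X → ι} {σ : Perm ι} {A : Matrix ι ι ℕ}

theorem card_sqrt_eq_sum_card_perm [DecidableEq X] :
    Nat.card {τ : Perm X // (∀ x, π (τ (τ x)) = σ (π x)) ∧ blockMatrix π τ = A} =
      ∑ f : X → ι, Nat.card {τ : Perm X // (∀ x, (f (τ x), π (τ x)) = (σ (π x), f x)) ∧
        ∀ i j, Nat.card {x // f x = i ∧ π x = j} = A i j} := by
  rw [card_subtype_eq_sum_card_fiber _ fun τ : Perm X => π ∘ τ]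
  refine Fintype.sum_congr _ _ fun f => Nat.card_congr (subtypeEquivRight fun τ => ?_)
  constructor
  · rintro ⟨⟨hτ, rfl⟩, rfl⟩
    exact ⟨fun x => by simp [hτ], fun i j => (blockMatrix_apply_eq_card τ i j).symm⟩
  · rintro ⟨hτ, hA⟩
    obtain rfl : π ∘ τ = f := funext fun x => (Prod.ext_iff.mp (hτ x)).2
    refine ⟨⟨fun x => (Prod.ext_iff.mp (hτ x)).1, ?_⟩, rfl⟩
    ext i j
    rw [blockMatrix_apply_eq_card]
    exact hA i j

theorem card_perm_eq_card_equiv (hA : ∀ i j, Aᵀ (σ⁻¹ i) j = A i j) (f : X → ι) :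
    Nat.card {τ : Perm X // (∀ x, (f (τ x), π (τ x)) = (σ (π x), f x)) ∧
        ∀ i j, Nat.card {x // f x = i ∧ π x = j} = A i j} =
      Nat.card {e : X ≃ Σ c : ι × ι, Fin (A c.1 c.2) // ∀ x, (e x).1 = (σ (π x), f x)} := by
  by_cases hf : ∀ i j, Nat.card {x // f x = i ∧ π x = j} = A i j
  · simp only [hf, implies_true, and_true]
    rw [card_equiv_fiberwise (fun x => (σ (π x), f x)) fun y => (f y, π y),
      card_equiv_fiberwise (fun x => (σ (π x), f x)) Sigma.fst]
    refine Fintype.prod_congr _ _ fun c => card_equiv_congr_right ?_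
    rw [Nat.card_congr (sigmaSubtype c), Nat.card_fin, ← hf]
    exact Nat.card_congr (subtypeEquivRight fun y => Prod.ext_iff)
  · simp only [hf, and_false, Nat.card_of_isEmpty]
    refine (@Nat.card_of_isEmpty _ ⟨fun ⟨e, he⟩ => hf fun l j => ?_⟩).symm
    calc Nat.card {x // f x = l ∧ π x = j}
        = Nat.card {x // (σ (π x), f x) = (σ j, l)} := Nat.card_congr <| subtypeEquivRight
          fun x => by rw [Prod.ext_iff, σ.injective.eq_iff, and_comm]
      _ = Nat.card {w : Σ c : ι × ι, Fin (A c.1 c.2) // w.1 = (σ j, l)} :=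
          Nat.card_congr (e.subtypeEquiv fun x => by rw [he])
      _ = A l j := by
          rw [Nat.card_congr (sigmaSubtype _), Nat.card_fin]
          simpa using (hA (σ j) l).symm

theorem card_sqrt_blockMatrix_eq [DecidableEq X] {m : ℕ}
    (hπ : ∀ i, Nat.card {x // π x = i} = m) (hrow : ∀ i, ∑ j, A i j = m)
    (hA : ∀ i j, Aᵀ (σ⁻¹ i) j = A i j) :
    Nat.card {τ : Perm X // (∀ x, π (τ (τ x)) = σ (π x)) ∧ blockMatrix π τ = A} =
      m.factorial ^ Fintype.card ι := by
  have hX (k : ι) : Nat.card {x // σ (π x) = k} = m := by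
    rw [← hπ (σ⁻¹ k)]
    exact Nat.card_congr (subtypeEquivRight fun x => Perm.eq_inv_iff_eq.symm)
  have hW (k : ι) : Nat.card {w : Σ c : ι × ι, Fin (A c.1 c.2) // w.1.1 = k} = m := by
    rw [card_subtype_eq_sum_card_fiber _ fun w => w.1.2, ← hrow k]
    refine Fintype.sum_congr _ _ fun l => (Nat.card_congr ?_).trans (Nat.card_fin _)
    exact (subtypeEquivRight fun w => Prod.ext_iff.symm).trans (sigmaSubtype (k, l))
  calc _ = ∑ f : X → ι, Nat.card
        {e : X ≃ Σ c : ι × ι, Fin (A c.1 c.2) // ∀ x, (e x).1 = (σ (π x), f x)} := by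
        rw [card_sqrt_eq_sum_card_perm]
        exact Fintype.sum_congr _ _ (card_perm_eq_card_equiv hA)
    _ = Nat.card {e : X ≃ Σ c : ι × ι, Fin (A c.1 c.2) // ∀ x, (e x).1.1 = σ (π x)} :=
        (card_equiv_fst_eq_sum Sigma.fst _).symm
    _ = ∏ k, Nat.card ({x // σ (π x) = k} ≃ {w : Σ c : ι × ι, Fin (A c.1 c.2) // w.1.1 = k}) :=
        card_equiv_fiberwise _ fun w : Σ c : ι × ι, Fin (A c.1 c.2) => w.1.1
    _ = ∏ _k : ι, m.factorial := by
        refine Fintype.prod_congr _ _ fun k => ?_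
        rw [card_equiv_congr_right ((hW k).trans (hX k).symm), Nat.card_perm, hX]
    _ = m.factorial ^ Fintype.card ι := Finset.prod_const _

end Count

theorem card_blk_eq {n m : ℕ} (hm : 0 < m) (i : Fin n) :
    Nat.card {k : Fin (n * m) // blk hm k = i} = m := by
  refine (Nat.card_congr ?_).trans (Nat.card_fin m)
  -- `blk hm k` is definitionally `(finProdFinEquiv.symm k).1`.
  exact (finProdFinEquiv.symm.subtypeEquiv fun k => Iff.rfl).trans
    ((prodSubtypeFstEquivSubtypeProd (p := (· = i))).trans (uniqueProd _ _))

/-- for fixed `σ ∈ S_n`, the map `F` sends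
`{τ ∈ S_{nm} | τ²σ⁻¹ ∈ S_m^n}` into `{A ∈ M(n,m) | σ·Aᵀ = A}`, is surjective onto that set,
and all its fibers have exactly `(m!)^n` elements. Here `τ²σ⁻¹ ∈ S_m^n` is expressed as
`τ²` mapping the block `P_i` onto `P_{σ(i)}` for each `i`. -/
theorem stmt4 (n m : ℕ) (hm : 0 < m) (σ : Equiv.Perm (Fin n)) :
    (∀ τ : Equiv.Perm (Fin (n * m)), (∀ k, blk hm (τ (τ k)) = σ (blk hm k)) →
      ((∀ i, ∑ j, Fmap hm τ i j = m) ∧ (∀ j, ∑ i, Fmap hm τ i j = m)) ∧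
        (∀ i j, (Fmap hm τ)ᵀ (σ⁻¹ i) j = Fmap hm τ i j)) ∧
    (∀ A : Matrix (Fin n) (Fin n) ℕ,
      ((∀ i, ∑ j, A i j = m) ∧ (∀ j, ∑ i, A i j = m)) → (∀ i j, Aᵀ (σ⁻¹ i) j = A i j) →
      ∃ τ : Equiv.Perm (Fin (n * m)),
        (∀ k, blk hm (τ (τ k)) = σ (blk hm k)) ∧ Fmap hm τ = A) ∧
    (∀ A : Matrix (Fin n) (Fin n) ℕ,
      ((∀ i, ∑ j, A i j = m) ∧ (∀ j, ∑ i, A i j = m)) → (∀ i j, Aᵀ (σ⁻¹ i) j = A i j) →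
      Nat.card {τ : Equiv.Perm (Fin (n * m)) //
          (∀ k, blk hm (τ (τ k)) = σ (blk hm k)) ∧ Fmap hm τ = A} =
        m.factorial ^ n) := by
  have hcard (A : Matrix (Fin n) (Fin n) ℕ) (hrow : ∀ i, ∑ j, A i j = m)
      (hA : ∀ i j, Aᵀ (σ⁻¹ i) j = A i j) :
      Nat.card {τ : Equiv.Perm (Fin (n * m)) //
        (∀ k, blk hm (τ (τ k)) = σ (blk hm k)) ∧ Fmap hm τ = A} = m.factorial ^ n :=
    (card_sqrt_blockMatrix_eq (card_blk_eq hm) hrow hA).trans (by rw [Fintype.card_fin])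
  refine ⟨fun τ hτ => ⟨⟨fun i => ?_, fun j => ?_⟩, blockMatrix_apply_inv hτ⟩,
    fun A hsum hA => ?_, fun A hsum hA => hcard A hsum.1 hA⟩
  · exact (sum_blockMatrix_row τ i).trans (card_blk_eq hm i)
  · exact (sum_blockMatrix_col τ j).trans (card_blk_eq hm j)
  · have hpos : 0 < Nat.card {τ : Equiv.Perm (Fin (n * m)) //
        (∀ k, blk hm (τ (τ k)) = σ (blk hm k)) ∧ Fmap hm τ = A} := by
      rw [hcard A hsum.1 hA]
      positivity
    obtain ⟨⟨τ, hτ⟩⟩ := (Nat.card_pos_iff.mp hpos).1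
    exact ⟨τ, hτ⟩
end

section
/- Let A be an n×n non-negative integer matrix with all row sums equal to m and satisfying A_{ij} = A_{σ(j)i} for all i, j (where σ ∈ S_n). Then the number of permutations τ ∈ S_{nm} such that τ² maps P_i to P_{σ(i)} for all i and #(P_i ∩ τ(P_j)) = A_{ij} for all i, j equals Π_{i=1}^n (m! / Π_j A_{ij}!) · Π_{i,j} A_{ij}! = (m!)^n. -/
open Matrix

/-- Bijections compatible with fiber maps correspond to families of fiber bijections. -/
def fiberEquivPerm {α α' β : Type*} (d : α → β) (d' : α' → β) :
    {e : α ≃ α' // ∀ a, d' (e a) = d a} ≃ ∀ b, ({a // d a = b} ≃ {a' // d' a' = b}) where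
  toFun e b := e.1.subtypeEquiv (fun a => by rw [e.2 a])
  invFun F := ⟨(Equiv.sigmaFiberEquiv d).symm.trans
      ((Equiv.sigmaCongrRight F).trans (Equiv.sigmaFiberEquiv d')),
    fun a => ((F (d a)) ⟨a, rfl⟩).2⟩
  left_inv e := Subtype.ext (Equiv.ext fun a => rfl)
  right_inv F := funext fun b => Equiv.ext fun x => by
    obtain ⟨a, rfl⟩ := x
    rfl

lemma card_fiberPerm {α α' β : Type*} [Fintype α] [Fintype α'] [Fintype β]
    (d : α → β) (d' : α' → β)
    (h : ∀ b, Nat.card {a // d a = b} = Nat.card {a' // d' a' = b}) :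
    Nat.card {e : α ≃ α' // ∀ a, d' (e a) = d a}
      = ∏ b, (Nat.card {a' // d' a' = b}).factorial := by
  classical
  rw [Nat.card_congr (fiberEquivPerm d d'), Nat.card_pi]
  refine Finset.prod_congr rfl fun b _ => ?_
  have e : {a // d a = b} ≃ {a' // d' a' = b} :=
    Fintype.equivOfCardEq (by simpa [Nat.card_eq_fintype_card] using h b)
  rw [Nat.card_eq_fintype_card, Fintype.card_equiv e, ← Nat.card_eq_fintype_card, h b]

def sigmaFstFiber {ι : Type*} (β : ι → Type*) (j : ι) : {s : Σ i, β i // s.1 = j} ≃ β j where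
  toFun s := cast (congrArg β s.2) s.1.2
  invFun b := ⟨⟨j, b⟩, rfl⟩
  left_inv := by rintro ⟨⟨i, b⟩, rfl⟩; rfl
  right_inv b := rfl

lemma key_count (n m : ℕ) (A : Fin n → ℕ) (h : ∑ j, A j = m) :
    Nat.card {f : Fin m → Fin n // ∀ j, Nat.card {x // f x = j} = A j} * ∏ j, (A j).factorial
      = m.factorial := by
  classical
  obtain ⟨e₀⟩ : Nonempty ((Σ j, Fin (A j)) ≃ Fin m) :=
    ⟨Fintype.equivOfCardEq (by simp [h])⟩
  set f₀ : Fin m → Fin n := fun x => (e₀.symm x).1 with hf₀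
  have hfib : ∀ j, Nat.card {x : Fin m // f₀ x = j} = A j := by
    intro j
    have e1 : {x : Fin m // f₀ x = j} ≃ {s : Σ j', Fin (A j') // s.1 = j} :=
      e₀.symm.subtypeEquiv fun x => Iff.rfl
    rw [Nat.card_congr (e1.trans (sigmaFstFiber _ j)), Nat.card_eq_fintype_card,
      Fintype.card_fin]
  have key : ∀ f : Fin m → Fin n,
      Nat.card {g : Equiv.Perm (Fin m) // f₀ ∘ ⇑g.symm = f}
        = if (∀ j, Nat.card {x // f x = j} = A j) then ∏ j, (A j).factorial else 0 := by
    intro f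
    split_ifs with hf
    · have e3 : {g : Equiv.Perm (Fin m) // f₀ ∘ ⇑g.symm = f}
          ≃ {g : Fin m ≃ Fin m // ∀ x, f (g x) = f₀ x} :=
        Equiv.subtypeEquivRight fun g => by
          rw [funext_iff]
          constructor
          · intro hh x; rw [← hh (g x)]; simp
          · intro hh x
            simp only [Function.comp_apply]
            rw [← hh (g.symm x)]; simp
      rw [Nat.card_congr e3, card_fiberPerm f₀ f (fun j => by rw [hfib, hf])]
      exact Finset.prod_congr rfl fun j _ => by rw [hf]
    · have : IsEmpty {g : Equiv.Perm (Fin m) // f₀ ∘ ⇑g.symm = f} := by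
        refine ⟨fun g => hf fun j => ?_⟩
        have hcg := Nat.card_congr (Equiv.subtypeEquiv
          (p := fun x => (f₀ ∘ ⇑g.1.symm) x = j) (q := fun y => f₀ y = j)
          g.1.symm fun x => Iff.rfl)
        rw [← g.2, hcg]
        exact hfib j
      exact Nat.card_of_isEmpty
  have hsigma : (Fintype.card (Equiv.Perm (Fin m)))
      = ∑ f : Fin m → Fin n, Nat.card {g : Equiv.Perm (Fin m) // f₀ ∘ ⇑g.symm = f} := by
    rw [← Nat.card_eq_fintype_card,
      Nat.card_congr (Equiv.sigmaFiberEquiv (fun g : Equiv.Perm (Fin m) => f₀ ∘ ⇑g.symm)).symm,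
      Nat.card_eq_fintype_card, Fintype.card_sigma]
    exact Finset.sum_congr rfl fun f _ => (Nat.card_eq_fintype_card).symm
  have hsum : ∑ f : Fin m → Fin n, Nat.card {g : Equiv.Perm (Fin m) // f₀ ∘ ⇑g.symm = f}
      = Nat.card {f : Fin m → Fin n // ∀ j, Nat.card {x // f x = j} = A j}
        * ∏ j, (A j).factorial := by
    rw [Finset.sum_congr rfl fun f _ => key f, Finset.sum_ite, Finset.sum_const,
      Finset.sum_const_zero, add_zero, smul_eq_mul, Nat.card_eq_fintype_card,
      Fintype.card_subtype]
  rw [← hsum, ← hsigma, Fintype.card_perm, Fintype.card_fin]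

def blkPair (n m : ℕ) (hm : 0 < m) : Fin n × Fin m ≃ Fin (n * m) where
  toFun p := ⟨p.1 * m + p.2, by
    have h1 : (p.1 : ℕ) + 1 ≤ n := p.1.isLt
    calc (p.1 : ℕ) * m + p.2 < ((p.1 : ℕ) + 1) * m := by
          have := p.2.isLt; rw [add_one_mul]; omega
      _ ≤ n * m := Nat.mul_le_mul_right m h1⟩
  invFun k := (blk hm k, ⟨(k : ℕ) % m, Nat.mod_lt _ hm⟩)
  left_inv p := by
    ext
    · show ((p.1 : ℕ) * m + p.2) / m = p.1
      rw [mul_comm, Nat.mul_add_div hm, Nat.div_eq_of_lt p.2.isLt, add_zero]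
    · show ((p.1 : ℕ) * m + p.2) % m = p.2
      rw [mul_comm, Nat.mul_add_mod, Nat.mod_eq_of_lt p.2.isLt]
  right_inv k := by
    ext
    show (k : ℕ) / m * m + (k : ℕ) % m = k
    rw [mul_comm]
    exact Nat.div_add_mod _ _

lemma blk_blkPair {n m : ℕ} (hm : 0 < m) (i : Fin n) (x : Fin m) :
    blk hm (blkPair n m hm (i, x)) = i := by
  have := (blkPair n m hm).left_inv (i, x)
  exact congrArg Prod.fst this

lemma blkPair_symm_fst {n m : ℕ} (hm : 0 < m) (k : Fin (n * m)) :
    ((blkPair n m hm).symm k).1 = blk hm k := rfl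

def fiberBlockEquiv {n m : ℕ} (hm : 0 < m) (c : Fin (n * m) → Fin n) (i j : Fin n) :
    {k : Fin (n * m) // blk hm k = i ∧ c k = j} ≃
      {x : Fin m // c (blkPair n m hm (i, x)) = j} where
  toFun k := ⟨((blkPair n m hm).symm k.1).2, by
    obtain ⟨k, hk1, hk2⟩ := k
    have hp : (i, ((blkPair n m hm).symm k).2) = (blkPair n m hm).symm k := by
      rw [← hk1]; rfl
    show c (blkPair n m hm (i, ((blkPair n m hm).symm k).2)) = j
    rw [hp, Equiv.apply_symm_apply]
    exact hk2⟩
  invFun x := ⟨blkPair n m hm (i, x.1), blk_blkPair hm i x.1, x.2⟩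
  left_inv k := by
    obtain ⟨k, hk1, hk2⟩ := k
    apply Subtype.ext
    show blkPair n m hm (i, ((blkPair n m hm).symm k).2) = k
    have hp : (i, ((blkPair n m hm).symm k).2) = (blkPair n m hm).symm k := by
      rw [← hk1]; rfl
    rw [hp, Equiv.apply_symm_apply]
  right_inv x := by
    apply Subtype.ext
    show ((blkPair n m hm).symm (blkPair n m hm (i, x.1))).2 = x.1
    rw [Equiv.symm_apply_apply]

def coloringsEquiv {n m : ℕ} (hm : 0 < m) (A : Matrix (Fin n) (Fin n) ℕ) :
    {c : Fin (n * m) → Fin n //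
        ∀ i j, Nat.card {k // blk hm k = i ∧ c k = j} = A i j} ≃
      ∀ i, {f : Fin m → Fin n // ∀ j, Nat.card {x // f x = j} = A i j} where
  toFun c i := ⟨fun x => c.1 (blkPair n m hm (i, x)), fun j => by
    rw [← c.2 i j]
    exact (Nat.card_congr (fiberBlockEquiv hm c.1 i j)).symm⟩
  invFun F := ⟨fun k => (F (blk hm k)).1 (((blkPair n m hm).symm k).2), fun i j => by
    rw [Nat.card_congr (fiberBlockEquiv hm _ i j)]
    have hiff : ∀ x : Fin m,
        ((F (blk hm (blkPair n m hm (i, x)))).1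
            (((blkPair n m hm).symm (blkPair n m hm (i, x))).2) = j)
          ↔ ((F i).1 x = j) := by
      intro x
      rw [Equiv.symm_apply_apply, blk_blkPair]
    rw [Nat.card_congr (Equiv.subtypeEquivRight hiff)]
    exact (F i).2 j⟩
  left_inv c := by
    apply Subtype.ext
    funext k
    show c.1 (blkPair n m hm (blk hm k, ((blkPair n m hm).symm k).2)) = c.1 k
    have hp : (blk hm k, ((blkPair n m hm).symm k).2) = (blkPair n m hm).symm k := rfl
    rw [hp, Equiv.apply_symm_apply]
  right_inv F := by
    funext i
    apply Subtype.ext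
    funext x
    show (F (blk hm (blkPair n m hm (i, x)))).1
        (((blkPair n m hm).symm (blkPair n m hm (i, x))).2) = (F i).1 x
    rw [Equiv.symm_apply_apply, blk_blkPair]

lemma card_goodPerms {n m : ℕ} (hm : 0 < m) (σ : Equiv.Perm (Fin n))
    (A : Matrix (Fin n) (Fin n) ℕ) (hsym : ∀ i j, A i j = A (σ j) i)
    (c : Fin (n * m) → Fin n)
    (hc : ∀ i j, Nat.card {k // blk hm k = i ∧ c k = j} = A i j) :
    Nat.card {τ : Equiv.Perm (Fin (n * m)) //
        ∀ k, blk hm (τ k) = σ (c k) ∧ c (τ k) = blk hm k}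
      = ∏ i, ∏ j, (A i j).factorial := by
  classical
  set d : Fin (n * m) → Fin n × Fin n := fun k => (blk hm k, c k) with hd
  set ds : Fin (n * m) → Fin n × Fin n := fun k => (σ (c k), blk hm k) with hds
  have hcard : ∀ b : Fin n × Fin n, Nat.card {k // d k = b} = A b.1 b.2 := by
    intro b
    rw [← hc b.1 b.2]
    exact Nat.card_congr (Equiv.subtypeEquivRight fun k => by
      simp [hd, Prod.ext_iff])
  have hcards : ∀ b : Fin n × Fin n, Nat.card {k // ds k = b} = A b.1 b.2 := by
    intro b
    have h1 : Nat.card {k // ds k = b}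
        = Nat.card {k // blk hm k = b.2 ∧ c k = σ.symm b.1} :=
      Nat.card_congr (Equiv.subtypeEquivRight fun k => by
        simp only [hds, Prod.ext_iff]
        rw [Equiv.apply_eq_iff_eq_symm_apply]
        tauto)
    rw [h1, hc b.2 (σ.symm b.1), hsym b.2 (σ.symm b.1), Equiv.apply_symm_apply]
  have e1 : {τ : Equiv.Perm (Fin (n * m)) //
        ∀ k, blk hm (τ k) = σ (c k) ∧ c (τ k) = blk hm k}
      ≃ {e : Fin (n * m) ≃ Fin (n * m) // ∀ k, d (e k) = ds k} :=
    Equiv.subtypeEquivRight fun τ => by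
      refine forall_congr' fun k => ?_
      simp [hd, hds, Prod.ext_iff]
  rw [Nat.card_congr e1, card_fiberPerm ds d (fun b => by rw [hcards, hcard]),
    Fintype.prod_prod_type]
  exact Finset.prod_congr rfl fun i _ => Finset.prod_congr rfl fun j _ => by
    rw [hcard (i, j)]

def bigEquiv {n m : ℕ} (hm : 0 < m) (σ : Equiv.Perm (Fin n))
    (A : Matrix (Fin n) (Fin n) ℕ) :
    {τ : Equiv.Perm (Fin (n * m)) //
        (∀ k, blk hm (τ (τ k)) = σ (blk hm k)) ∧
        ∀ i j, Nat.card {k : Fin (n * m) // blk hm k = i ∧ blk hm (τ.symm k) = j} = A i j} ≃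
      Σ c : {c : Fin (n * m) → Fin n //
          ∀ i j, Nat.card {k // blk hm k = i ∧ c k = j} = A i j},
        {τ : Equiv.Perm (Fin (n * m)) //
          ∀ k, blk hm (τ k) = σ (c.1 k) ∧ c.1 (τ k) = blk hm k} where
  toFun τ := ⟨⟨fun k => blk hm (τ.1.symm k), τ.2.2⟩,
    ⟨τ.1, fun k => ⟨by simpa using τ.2.1 (τ.1.symm k), by simp⟩⟩⟩
  invFun p := ⟨p.2.1,
    fun k => by rw [(p.2.2 (p.2.1 k)).1, (p.2.2 k).2],
    fun i j => by
      have hcc : ∀ k, blk hm (p.2.1.symm k) = p.1.1 k := fun k => by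
        have h := (p.2.2 (p.2.1.symm k)).2
        simpa using h.symm
      rw [← p.1.2 i j]
      exact Nat.card_congr (Equiv.subtypeEquivRight fun k => by rw [hcc k])⟩
  left_inv τ := Subtype.ext rfl
  right_inv := by
    rintro ⟨⟨c, hcA⟩, τ, hτ⟩
    have hcc : (fun k => blk hm (τ.symm k)) = c := funext fun k => by
      have h := (hτ (τ.symm k)).2
      simpa using h.symm
    subst hcc
    rfl

/-- given `A` with row sums `m` and `A_{ij} = A_{σ(j)i}`, the number of
`τ ∈ S_{nm}` with `τ²(P_i) = P_{σ(i)}` for all `i` and `#(P_i ∩ τ(P_j)) = A_{ij}` for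
all `i, j` equals `Π_i (m!/Π_j A_{ij}!) · Π_{i,j} A_{ij}!`, which equals `(m!)^n`. -/
theorem stmt5 (n m : ℕ) (hm : 0 < m) (σ : Equiv.Perm (Fin n))
    (A : Matrix (Fin n) (Fin n) ℕ)
    (hrow : ∀ i, ∑ j, A i j = m)
    (hsym : ∀ i j, A i j = A (σ j) i) :
    Nat.card {τ : Equiv.Perm (Fin (n * m)) //
        (∀ k, blk hm (τ (τ k)) = σ (blk hm k)) ∧
        ∀ i j, Nat.card {k : Fin (n * m) // blk hm k = i ∧ blk hm (τ.symm k) = j} = A i j} =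
      (∏ i, Nat.multinomial Finset.univ (fun j => A i j)) * ∏ i, ∏ j, (A i j).factorial ∧
    (∏ i, Nat.multinomial Finset.univ (fun j => A i j)) * (∏ i, ∏ j, (A i j).factorial) =
      m.factorial ^ n := by
  classical
  have hterm : ∀ i, Nat.multinomial Finset.univ (fun j => A i j) * ∏ j, (A i j).factorial
      = m.factorial := by
    intro i
    rw [mul_comm, Nat.multinomial_spec, hrow i]
  have hCi : ∀ i, Nat.card {f : Fin m → Fin n // ∀ j, Nat.card {x // f x = j} = A i j}
      = Nat.multinomial Finset.univ (fun j => A i j) := by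
    intro i
    have hpos : 0 < ∏ j, (A i j).factorial :=
      Finset.prod_pos fun j _ => Nat.factorial_pos _
    refine Nat.eq_of_mul_eq_mul_right hpos ?_
    rw [key_count n m (A i) (hrow i), hterm i]
  constructor
  · rw [Nat.card_congr (bigEquiv hm σ A), Nat.card_eq_fintype_card, Fintype.card_sigma]
    have hgp : ∀ c : {c : Fin (n * m) → Fin n //
          ∀ i j, Nat.card {k // blk hm k = i ∧ c k = j} = A i j},
        Fintype.card {τ : Equiv.Perm (Fin (n * m)) //
            ∀ k, blk hm (τ k) = σ (c.1 k) ∧ c.1 (τ k) = blk hm k}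
          = ∏ i, ∏ j, (A i j).factorial := fun c => by
      rw [← Nat.card_eq_fintype_card]
      exact card_goodPerms hm σ A hsym c.1 c.2
    rw [Finset.sum_congr rfl fun c _ => hgp c, Finset.sum_const, Finset.card_univ,
      smul_eq_mul, ← Nat.card_eq_fintype_card,
      Nat.card_congr (coloringsEquiv hm A), Nat.card_pi]
    congr 1
    exact Finset.prod_congr rfl fun i _ => hCi i
  · rw [← Finset.prod_mul_distrib,
      Finset.prod_congr rfl fun i _ => hterm i, Finset.prod_const, Finset.card_univ,
      Fintype.card_fin]
end

section
/- For a partition ρ of n, set d(ρ) = Σ_{1≤i<j≤ℓ(ρ)} gcd(ρ_i, ρ_j) + Σ_i ⌊(ρ_i − 1)/2⌋ and ε_ρ = (−1)^{n − ℓ(ρ)}. Then (−1)^{d(ρ)} = (−1)^{n(n−1)/2} · ε_ρ^{n−1}. -/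
lemma floor_decomp (a : ℕ) (h : 1 ≤ a) : (a-1)/2 % 2 = (a/2 + a + 1) % 2 := by
  obtain ⟨q, r, hr, rfl⟩ : ∃ q r, r < 4 ∧ a = 4*q + r :=
    ⟨a/4, a%4, Nat.mod_lt _ (by norm_num), (Nat.div_add_mod a 4).symm⟩
  interval_cases r <;> omega

lemma gcd_decomp (a b : ℕ) : Nat.gcd a b + (a%2)*(b%2) = a%2 + b%2 + 2*(Nat.gcd a b / 2) := by
  have h : 2 ∣ Nat.gcd a b ↔ 2 ∣ a ∧ 2 ∣ b :=
    ⟨fun h => ⟨h.trans (Nat.gcd_dvd_left a b), h.trans (Nat.gcd_dvd_right a b)⟩,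
     fun ⟨h1,h2⟩ => Nat.dvd_gcd h1 h2⟩
  rcases Nat.mod_two_eq_zero_or_one a with ha|ha <;>
    rcases Nat.mod_two_eq_zero_or_one b with hb|hb <;> rw [ha, hb] <;> omega

lemma sym_decomp {ℓ : ℕ} (f : Fin ℓ → Fin ℓ → ℕ) (hsym : ∀ i j, f i j = f j i) :
    ∑ i, ∑ j, f i j = 2 * (∑ i, ∑ j ∈ Finset.Ioi i, f i j) + ∑ i, f i i := by
  have hswap : ∑ i : Fin ℓ, ∑ j ∈ Finset.Iio i, f i j
      = ∑ i : Fin ℓ, ∑ j ∈ Finset.Ioi i, f i j := by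
    rw [Finset.sum_comm' (s' := fun j => Finset.Ioi j) (t' := Finset.univ)
      (fun x y => by simp)]
    exact Finset.sum_congr rfl fun i _ => Finset.sum_congr rfl fun j _ => hsym j i
  have huniv : ∀ i : Fin ℓ, ∑ j, f i j
      = ((∑ j ∈ Finset.Iio i, f i j) + ∑ j ∈ Finset.Ioi i, f i j) + f i i := by
    intro i
    have hd1 : Disjoint (Finset.Iio i) (Finset.Ioi i) := by
      simp [Finset.disjoint_left]
      intro j hj; omega
    have hd2 : Disjoint (Finset.Iio i ∪ Finset.Ioi i) ({i} : Finset (Fin ℓ)) := by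
      simp [Finset.disjoint_left]
    have hu : (Finset.Iio i ∪ Finset.Ioi i) ∪ {i} = Finset.univ := by
      ext j
      simp only [Finset.mem_union, Finset.mem_Iio, Finset.mem_Ioi, Finset.mem_singleton,
        Finset.mem_univ, iff_true]
      rcases lt_trichotomy j i with h|h|h <;> tauto
    rw [← hu, Finset.sum_union hd2, Finset.sum_union hd1, Finset.sum_singleton]
  rw [Finset.sum_congr rfl fun i _ => huniv i, Finset.sum_add_distrib,
    Finset.sum_add_distrib, hswap]
  ring

lemma negOnePow_congr {a b : ℕ} (h : a % 2 = b % 2) : (-1:ℤ)^a = (-1)^b := by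
  conv_lhs => rw [← Nat.div_add_mod a 2]
  conv_rhs => rw [← Nat.div_add_mod b 2]
  rw [h, pow_add, pow_add, pow_mul, pow_mul, neg_one_sq]
  simp

/-- for a partition `ρ = (ρ₁, …, ρ_ℓ)` of `n`, setting
`d(ρ) = Σ_{i<j} gcd(ρ_i, ρ_j) + Σ_i ⌊(ρ_i − 1)/2⌋` and `ε_ρ = (−1)^{n−ℓ}`, we have
`(−1)^{d(ρ)} = (−1)^{n(n−1)/2} · ε_ρ^{n−1}`. -/
theorem stmt12 (n ℓ : ℕ) (ρ : Fin ℓ → ℕ) (hpos : ∀ i, 0 < ρ i)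
    (hsum : ∑ i, ρ i = n) :
    (-1 : ℤ) ^ ((∑ i : Fin ℓ, ∑ j ∈ Finset.Ioi i, Nat.gcd (ρ i) (ρ j)) +
        ∑ i : Fin ℓ, (ρ i - 1) / 2) =
      (-1 : ℤ) ^ (n * (n - 1) / 2) * ((-1 : ℤ) ^ (n - ℓ)) ^ (n - 1) := by
  have hln : ℓ ≤ n := by
    calc ℓ = ∑ _i : Fin ℓ, 1 := by simp
    _ ≤ ∑ i, ρ i := Finset.sum_le_sum fun i _ => hpos i
    _ = n := hsum
  rcases Nat.eq_zero_or_pos n with hn | hn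
  · have hl0 : ℓ = 0 := by omega
    subst hl0; subst hn
    simp
  set x : Fin ℓ → ℕ := fun i => ρ i % 2 with hx
  set A := ∑ i : Fin ℓ, ∑ j ∈ Finset.Ioi i, Nat.gcd (ρ i) (ρ j) with hA
  set F := ∑ i : Fin ℓ, (ρ i - 1) / 2 with hF
  set S := ∑ i : Fin ℓ, ρ i / 2 with hS
  set m := ∑ i : Fin ℓ, x i with hm
  set T := ∑ i : Fin ℓ, ∑ j ∈ Finset.Ioi i, x i * x j with hT
  set P := ∑ i : Fin ℓ, ∑ j ∈ Finset.Ioi i, (x i + x j) with hP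
  set R := ∑ i : Fin ℓ, ∑ j ∈ Finset.Ioi i, Nat.gcd (ρ i) (ρ j) / 2 with hR
  -- f1
  have f1 : A + T = P + 2 * R := by
    rw [hA, hT, hP, hR, Finset.mul_sum, ← Finset.sum_add_distrib, ← Finset.sum_add_distrib]
    refine Finset.sum_congr rfl fun i _ => ?_
    rw [Finset.mul_sum, ← Finset.sum_add_distrib, ← Finset.sum_add_distrib]
    exact Finset.sum_congr rfl fun j _ => gcd_decomp (ρ i) (ρ j)
  -- f2
  have f2 : ℓ * m + ℓ * m = 2 * P + (m + m) := by
    have h := sym_decomp (fun i j => x i + x j) (fun i j => by ring)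
    have hfull : ∑ i : Fin ℓ, ∑ j : Fin ℓ, (x i + x j) = ℓ * m + ℓ * m := by
      calc ∑ i : Fin ℓ, ∑ j : Fin ℓ, (x i + x j)
          = ∑ i : Fin ℓ, (ℓ * x i + m) := by
            refine Finset.sum_congr rfl fun i _ => ?_
            rw [Finset.sum_add_distrib, Finset.sum_const, Finset.card_univ,
              Fintype.card_fin, smul_eq_mul, hm]
        _ = ℓ * m + ℓ * m := by
            rw [Finset.sum_add_distrib, ← Finset.mul_sum, ← hm, Finset.sum_const,
              Finset.card_univ, Fintype.card_fin, smul_eq_mul]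
    have hdiag : ∑ i : Fin ℓ, (x i + x i) = m + m := by
      rw [Finset.sum_add_distrib, ← hm]
    rw [hfull, hdiag, ← hP] at h
    omega
  -- f3
  have f3 : m * m = 2 * T + m := by
    have h := sym_decomp (fun i j => x i * x j) (fun i j => by ring)
    have hfull : ∑ i : Fin ℓ, ∑ j : Fin ℓ, (x i * x j) = m * m := by
      calc ∑ i : Fin ℓ, ∑ j : Fin ℓ, (x i * x j)
          = ∑ i : Fin ℓ, x i * m := by
            refine Finset.sum_congr rfl fun i _ => ?_
            rw [← Finset.mul_sum, ← hm]
        _ = m * m := by rw [← Finset.sum_mul, ← hm]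
    have hdiag : ∑ i : Fin ℓ, (x i * x i) = m := by
      rw [hm]
      refine Finset.sum_congr rfl fun i _ => ?_
      have : x i = 0 ∨ x i = 1 := by
        simp only [hx]; omega
      rcases this with h'|h' <;> rw [h']
    rw [hfull, hdiag, ← hT] at h
    exact h
  -- f4
  have f4 : n = 2 * S + m := by
    rw [← hsum, hS, hm, Finset.mul_sum, ← Finset.sum_add_distrib]
    refine Finset.sum_congr rfl fun i _ => ?_
    simp only [hx]
    omega
  -- f5
  have f5 : F % 2 = (S + n + ℓ) % 2 := by
    have h1 : S + n + ℓ = ∑ i : Fin ℓ, (ρ i / 2 + ρ i + 1) := by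
      rw [Finset.sum_add_distrib, Finset.sum_add_distrib, hsum, ← hS, Finset.sum_const,
        Finset.card_univ, Fintype.card_fin, smul_eq_mul, mul_one]
    rw [hF, h1, Finset.sum_nat_mod, Finset.sum_nat_mod (Finset.univ) 2 (fun i => ρ i / 2 + ρ i + 1)]
    congr 1
    exact Finset.sum_congr rfl fun i _ => floor_decomp (ρ i) (hpos i)
  -- f6
  have hev : 2 ∣ n * (n - 1) := by
    have h := Nat.even_mul_succ_self (n - 1)
    rw [Nat.sub_add_cancel hn] at h
    rw [mul_comm]
    exact h.two_dvd
  have f6 : 2 * (n * (n - 1) / 2) = n * (n - 1) := Nat.mul_div_cancel' hev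
  -- pass to ℤ
  set Q := n * (n - 1) / 2 with hQ
  set Wn := (n - ℓ) * (n - 1) with hWn
  have g1 : (A:ℤ) + T = P + 2*R := by exact_mod_cast f1
  have g2 : (ℓ:ℤ)*m + ℓ*m = 2*P + ((m:ℤ) + m) := by exact_mod_cast f2
  have g3 : (m:ℤ)*m = 2*T + m := by exact_mod_cast f3
  have g4 : (n:ℤ) = 2*S + m := by exact_mod_cast f4
  have g6 : 2*(Q:ℤ) = n*((n:ℤ)-1) := by
    have := congrArg (fun t : ℕ => (t:ℤ)) f6
    push_cast [Nat.cast_sub hn] at this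
    linarith
  have g7 : (Wn:ℤ) = ((n:ℤ) - ℓ)*((n:ℤ)-1) := by
    rw [hWn]
    push_cast [Nat.cast_sub hn, Nat.cast_sub hln]
    ring
  have hb' : (2:ℤ) ∣ (F:ℤ) - ((S:ℤ) + n + ℓ) := by
    have h := congrArg (fun t : ℕ => (t:ℤ)) f5
    push_cast at h
    omega
  obtain ⟨b, hb⟩ := hb'
  have key : 2*(((A:ℤ) + F) - ((Q:ℤ) + Wn)) =
      4 * ((ℓ:ℤ)*m + m - m*m + R + 3*S - 3*(S:ℤ)*S - 3*(S:ℤ)*m + b + (S:ℤ)*ℓ) := by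
    linear_combination 2*g1 + 2*hb - g6 - 2*g7 + g3 - g2 +
      (5 + 2*(ℓ:ℤ) - 3*(n:ℤ) - 6*(S:ℤ) - 3*(m:ℤ)) * g4
  have hdvd : (2:ℤ) ∣ ((A:ℤ) + F) - ((Q:ℤ) + Wn) := by
    exact ⟨(ℓ:ℤ)*m + m - m*m + R + 3*S - 3*(S:ℤ)*S - 3*(S:ℤ)*m + b + (S:ℤ)*ℓ,
      mul_left_cancel₀ two_ne_zero (key.trans (by ring))⟩
  rw [← pow_mul, ← pow_add]
  exact negOnePow_congr (by omega)
end

section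
/- For a partition ρ of n, the quantity Σ_{1≤i<j≤ℓ(ρ)} gcd(ρ_i, ρ_j) + Σ_i ⌊(ρ_i − 1)/2⌋ is at most n(n−1)/2, with equality if and only if ρ = (1,1,...,1). -/
/-!
Since `n = Σ ρᵢ`, counting pairs gives `n(n-1)/2 = C(n,2) = Σ_{i<j} ρᵢρⱼ + Σᵢ C(ρᵢ,2)`.
Term by term `gcd(ρᵢ,ρⱼ) ≤ ρᵢρⱼ` and `⌊(ρᵢ-1)/2⌋ ≤ C(ρᵢ,2)`, the latter with equality
exactly when `ρᵢ ≤ 1`.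
-/

open Finset

theorem Nat.add_choose_two (a b : ℕ) : (a + b).choose 2 = a.choose 2 + a * b + b.choose 2 := by
  rw [Nat.add_choose_eq]
  simp [Finset.Nat.antidiagonal_succ]
  ring

theorem Fin.choose_two_sum {ℓ : ℕ} (f : Fin ℓ → ℕ) :
    (∑ i, f i).choose 2 = ∑ i, ∑ j ∈ Ioi i, f i * f j + ∑ i, (f i).choose 2 := by
  induction ℓ with
  | zero => simp
  | succ ℓ ih =>
    simp only [Fin.sum_univ_succ, Fin.sum_Ioi_zero, Fin.sum_Ioi_succ, Nat.add_choose_two,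
      ih (fun i => f i.succ), ← mul_sum]
    ring

theorem Nat.sub_one_div_two_le_choose_two (m : ℕ) : (m - 1) / 2 ≤ m.choose 2 := by
  rw [Nat.choose_two_right]
  rcases m with _ | m
  · rfl
  · exact Nat.div_le_div_right (Nat.le_mul_of_pos_left _ m.succ_pos)

theorem Nat.sub_one_div_two_eq_choose_two_iff {m : ℕ} : (m - 1) / 2 = m.choose 2 ↔ m ≤ 1 := by
  refine ⟨fun h => ?_, fun h => by interval_cases m <;> rfl⟩
  by_contra! hm
  rw [Nat.choose_two_right] at h
  have : 2 * (m - 1) ≤ m * (m - 1) := Nat.mul_le_mul_right _ hm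
  omega

/-- for a partition `ρ = (ρ₁, …, ρ_ℓ)` of `n`, the quantity
`Σ_{i<j} gcd(ρ_i, ρ_j) + Σ_i ⌊(ρ_i − 1)/2⌋` is at most `n(n−1)/2`, with equality if and
only if `ρ = (1, 1, …, 1)`. -/
theorem stmt13 (n ℓ : ℕ) (ρ : Fin ℓ → ℕ) (hpos : ∀ i, 0 < ρ i)
    (hsum : ∑ i, ρ i = n) :
    (∑ i : Fin ℓ, ∑ j ∈ Finset.Ioi i, Nat.gcd (ρ i) (ρ j)) +
        (∑ i : Fin ℓ, (ρ i - 1) / 2) ≤ n * (n - 1) / 2 ∧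
      ((∑ i : Fin ℓ, ∑ j ∈ Finset.Ioi i, Nat.gcd (ρ i) (ρ j)) +
          (∑ i : Fin ℓ, (ρ i - 1) / 2) = n * (n - 1) / 2 ↔ ∀ i, ρ i = 1) := by
  have hgcd : ∑ i, ∑ j ∈ Ioi i, (ρ i).gcd (ρ j) ≤ ∑ i, ∑ j ∈ Ioi i, ρ i * ρ j :=
    sum_le_sum fun i _ => sum_le_sum fun j _ => Nat.gcd_le_mul (hpos i) (hpos j)
  have hhalf : ∀ i ∈ univ, (ρ i - 1) / 2 ≤ (ρ i).choose 2 :=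
    fun i _ => Nat.sub_one_div_two_le_choose_two (ρ i)
  rw [← Nat.choose_two_right, ← hsum, Fin.choose_two_sum]
  refine ⟨add_le_add hgcd (sum_le_sum hhalf), ?_⟩
  rw [add_eq_add_iff_eq_and_eq hgcd (sum_le_sum hhalf), sum_eq_sum_iff_of_le hhalf]
  constructor
  · rintro ⟨-, hterm⟩ i
    have := Nat.sub_one_div_two_eq_choose_two_iff.1 (hterm i (mem_univ i))
    have := hpos i
    omega
  · intro hone
    exact ⟨by simp [hone], fun i _ => Nat.sub_one_div_two_eq_choose_two_iff.2 (hone i).le⟩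
end

section
/- Every equivalence class C ∈ T(n,2)/∼ decomposes uniquely (up to reordering) as a direct sum of irreducible classes, and the map C ↦ λ_C sending C to the multiset of sizes of its irreducible summands is a bijection between T(n,2)/∼ and the set of partitions of n. -/
open Matrix

/-- `A` and `B` are permutation equivalent. -/
def permEquiv {n : ℕ} (A B : Matrix (Fin n) (Fin n) ℕ) : Prop :=
  ∃ σ τ : Equiv.Perm (Fin n), ∀ i j, B i j = A (σ i) (τ j)

/-- The canonical irreducible element of `T(k,2)/∼`: for `k = 1` it is `(2)`, and for
`k ≥ 2` it is the "path" matrix with `1`s on the first super- and sub-diagonal and `1`s in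
the top-left and bottom-right corners. -/
def pathMat (k : ℕ) : Matrix (Fin k) (Fin k) ℕ := fun i j =>
  (if (i : ℕ) + 1 = (j : ℕ) ∨ (j : ℕ) + 1 = (i : ℕ) then 1 else 0) +
    (if i = j ∧ (i : ℕ) = 0 then 1 else 0) +
    (if i = j ∧ (i : ℕ) + 1 = k then 1 else 0)

/-- The block-diagonal matrix with diagonal blocks `pathMat k` for `k` in the list `L`. -/
def listMat : (L : List ℕ) → Matrix (Fin L.sum) (Fin L.sum) ℕ
  | [] => fun i _ => 0
  | k :: L =>
      (Matrix.fromBlocks (pathMat k) 0 0 (listMat L)).submatrix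
        (finSumFinEquiv.symm ∘ Fin.cast (by simp))
        (finSumFinEquiv.symm ∘ Fin.cast (by simp))

/-- The canonical matrix in `T(n,2)` associated to a partition `μ` of `n`: the
block-diagonal sum of the irreducible matrices `pathMat k` over the parts `k` of `μ`. -/
noncomputable def canonP {n : ℕ} (μ : n.Partition) : Matrix (Fin n) (Fin n) ℕ :=
  (listMat μ.parts.toList).submatrix
    (Fin.cast (by simp [μ.parts_sum]))
    (Fin.cast (by simp [μ.parts_sum]))

/-!
A nonnegative integer matrix `A` with all line sums `2` is, by Hall's theorem applied twice, a sum
`P α + P β` of two permutation matrices. The rows sharing a column with row `i` are `π i` and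
`π⁻¹ i` for `π = β⁻¹ * α`, so the connected blocks of `A` are the cycles of `π`. Permuting rows
and columns of `A` conjugates `π`, and conversely any conjugate of `π` arises in this way. The
decomposition `A = P α + P β` is not unique, but a second one swaps `α` and `β` exactly on a union
of cycles of `π`, which replaces `π` by `π⁻¹` there and so keeps its cycle type. Hence the class of
`A` is determined by the cycle partition of `π`, which for the block sum of the `pathMat k` is the
partition of block sizes. As `Aᵀ = P α⁻¹ + P β⁻¹` gives a conjugate of `π⁻¹`, also `A ∼ Aᵀ`.
-/

open Equiv Finset

namespace Equiv.Perm

variable {α β : Type*} [Fintype α] [DecidableEq α] [Fintype β] [DecidableEq β]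

theorem cycleType_permCongr (e : α ≃ β) (σ : Perm α) :
    (e.permCongr σ).cycleType = σ.cycleType := by
  have : e.permCongr σ = σ.extendDomain (e.trans (subtypeUnivEquiv fun _ => trivial).symm) := by
    ext x
    rw [extendDomain_apply_subtype _ _ trivial]
    simp [permCongr_apply]
  rw [this, cycleType_extendDomain]

theorem cycleType_sumCongr (σ : Perm α) (τ : Perm β) :
    (sumCongr σ τ).cycleType = σ.cycleType + τ.cycleType := by
  have hl : sumCongr σ (1 : Perm β) = σ.extendDomain sumIsLeft.symm := by
    ext (a | b)
    · exact (extendDomain_apply_image σ sumIsLeft.symm a).symm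
    · exact (extendDomain_apply_not_subtype σ _ (by simp)).symm
  have hr : sumCongr (1 : Perm α) τ = τ.extendDomain sumIsRight.symm := by
    ext (a | b)
    · exact (extendDomain_apply_not_subtype τ _ (by simp)).symm
    · exact (extendDomain_apply_image τ sumIsRight.symm b).symm
  have hdisj : Disjoint (sumCongr σ (1 : Perm β)) (sumCongr 1 τ) := by
    rintro (a | b)
    · exact Or.inr rfl
    · exact Or.inl rfl
  rw [← one_mul τ, ← mul_one σ, ← sumCongr_mul, mul_one, one_mul, hdisj.cycleType_mul, hl, hr,
    cycleType_extendDomain, cycleType_extendDomain]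

theorem parts_partition_permCongr (e : α ≃ β) (σ : Perm α) :
    (e.permCongr σ).partition.parts = σ.partition.parts := by
  rw [parts_partition, parts_partition, ← sum_cycleType, ← sum_cycleType, cycleType_permCongr,
    Fintype.card_congr e]

theorem parts_partition_sumCongr (σ : Perm α) (τ : Perm β) :
    (sumCongr σ τ).partition.parts = σ.partition.parts + τ.partition.parts := by
  simp only [parts_partition, ← sum_cycleType, cycleType_sumCongr, Fintype.card_sum,
    Multiset.sum_add]
  have := sum_cycleType_le σ
  have := sum_cycleType_le τ
  rw [show Fintype.card α + Fintype.card β - (σ.cycleType.sum + τ.cycleType.sum) =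
    (Fintype.card α - σ.cycleType.sum) + (Fintype.card β - τ.cycleType.sum) by omega,
    Multiset.replicate_add]
  abel

theorem parts_partition_finRotate {k : ℕ} (hk : 0 < k) : (finRotate k).partition.parts = {k} := by
  obtain _ | _ | k := k
  · contradiction
  · simp [parts_partition, finRotate_one, ← one_def]
  · simp [parts_partition, cycleType_finRotate]

theorem partition_inv (σ : Perm α) : σ⁻¹.partition = σ.partition :=
  partition_eq_of_isConj.1 (isConj_iff_cycleType_eq.2 (cycleType_inv σ))

theorem partition_conj (σ τ : Perm α) : (τ * σ * τ⁻¹).partition = σ.partition :=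
  (partition_eq_of_isConj.1 (isConj_iff.2 ⟨τ, rfl⟩)).symm

theorem cycleType_of_eqOn_of_eqOn_inv {π ρ : Perm α} (p : α → Prop) [DecidablePred p]
    (hp : ∀ x, p (π x) ↔ p x) (hρp : ∀ x, p x → ρ x = π x)
    (hρnp : ∀ x, ¬ p x → ρ x = π⁻¹ x) : ρ.cycleType = π.cycleType := by
  have hpinv : ∀ x, p (π⁻¹ x) ↔ p x := fun x => by simpa using (hp (π⁻¹ x)).symm
  let τ : Perm α := ofSubtype (π.subtypePerm (p := fun x => ¬ p x) fun x => not_congr (hp x))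
  have hτp : ∀ x, p x → τ x = x := fun x hx =>
    ofSubtype_apply_of_not_mem (p := fun x => ¬ p x) _ (not_not_intro hx)
  have hτnp : ∀ x, ¬ p x → τ x = π x := fun x hx =>
    ofSubtype_apply_of_mem (p := fun x => ¬ p x) _ hx
  have hτinv : ∀ x, ¬ p x → τ⁻¹ x = π⁻¹ x := fun x hx => by
    rw [Perm.inv_eq_iff_eq, hτnp _ (by rwa [hpinv]), Perm.coe_inv, apply_symm_apply]
  have hdisj : Disjoint (π * τ⁻¹) τ := fun x => by
    by_cases hx : p x
    · exact Or.inr (hτp x hx)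
    · exact Or.inl (by rw [mul_apply, hτinv x hx, Perm.coe_inv, apply_symm_apply])
  have hρ : ρ = π * τ⁻¹ * τ⁻¹ := by
    ext x
    by_cases hx : p x
    · have hτx : τ⁻¹ x = x := by rw [Perm.inv_eq_iff_eq, hτp x hx]
      rw [hρp x hx, mul_apply, mul_apply, hτx, hτx]
    · rw [hρnp x hx, mul_apply, mul_apply, hτinv x hx, hτinv _ (by rwa [hpinv]),
        Perm.coe_inv, apply_symm_apply]
  rw [hρ, hdisj.inv_right.cycleType_mul, cycleType_inv,
    ← hdisj.cycleType_mul, inv_mul_cancel_right]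

end Equiv.Perm

namespace Matrix

variable {m m' R : Type*} [DecidableEq m] [DecidableEq m']

theorem permMatrix_apply [Zero R] [One R] (σ : Perm m) (i j : m) :
    σ.permMatrix R i j = if σ i = j then 1 else 0 := by
  simp [PEquiv.toMatrix_apply]

theorem permMatrix_submatrix [Zero R] [One R] (σ τ₁ τ₂ : Perm m) :
    (σ.permMatrix R).submatrix τ₁ τ₂ = (τ₂⁻¹ * σ * τ₁).permMatrix R := by
  ext i j
  simp [← Perm.eq_inv_iff_eq]

theorem permMatrix_submatrix_equiv [Zero R] [One R] (σ : Perm m) (e : m' ≃ m) :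
    (σ.permMatrix R).submatrix e e = (e.symm.permCongr σ).permMatrix R := by
  ext i j
  simp [← Equiv.eq_symm_apply]

theorem fromBlocks_permMatrix [Zero R] [One R] (σ : Perm m) (τ : Perm m') :
    fromBlocks (σ.permMatrix R) 0 0 (τ.permMatrix R) = (Perm.sumCongr σ τ).permMatrix R := by
  ext (i | i) (j | j) <;> simp

variable [Fintype m] {A : Matrix m m ℕ} {k : ℕ}

theorem exists_perm_forall_ne_zero (hk : 0 < k) (hr : ∀ i, ∑ j, A i j = k)
    (hc : ∀ j, ∑ i, A i j = k) : ∃ σ : Perm m, ∀ i, A i (σ i) ≠ 0 := by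
  let f (i : m) : Finset m := {j | A i j ≠ 0}
  have hrow (i : m) : ∑ j ∈ f i, A i j = k := by
    rw [← hr i]
    exact sum_subset (subset_univ _) (by simp [f])
  have hall (s : Finset m) : #s ≤ #(s.biUnion f) := by
    refine le_of_mul_le_mul_right ?_ hk
    calc #s * k = ∑ i ∈ s, ∑ j ∈ f i, A i j := by simp [hrow]
      _ ≤ ∑ i ∈ s, ∑ j ∈ s.biUnion f, A i j :=
        sum_le_sum fun i hi => sum_le_sum_of_subset (subset_biUnion_of_mem f hi)
      _ = ∑ j ∈ s.biUnion f, ∑ i ∈ s, A i j := sum_comm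
      _ ≤ ∑ j ∈ s.biUnion f, ∑ i, A i j :=
        sum_le_sum fun j _ => sum_le_sum_of_subset (subset_univ s)
      _ = #(s.biUnion f) * k := by simp [hc]
  obtain ⟨g, hg, hgf⟩ := (all_card_le_biUnion_card_iff_exists_injective f).1 hall
  refine ⟨Equiv.ofBijective g (Finite.injective_iff_bijective.1 hg), fun i => ?_⟩
  simpa [f] using hgf i

theorem exists_eq_sum_permMatrix (hr : ∀ i, ∑ j, A i j = k) (hc : ∀ j, ∑ i, A i j = k) :
    ∃ σ : Fin k → Perm m, A = ∑ t, (σ t).permMatrix ℕ := by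
  induction k generalizing A with
  | zero =>
    refine ⟨Fin.elim0, ?_⟩
    ext i j
    simpa using (sum_eq_zero_iff.1 (hr i)) j (mem_univ j)
  | succ k ih =>
    obtain ⟨σ, hσ⟩ := exists_perm_forall_ne_zero k.succ_pos hr hc
    have hle : ∀ i j, σ.permMatrix ℕ i j ≤ A i j := fun i j => by
      rw [permMatrix_apply]
      split_ifs with h
      · exact Nat.one_le_iff_ne_zero.2 (h ▸ hσ i)
      · exact Nat.zero_le _
    have hP := permMatrix_mem_doublyStochastic (R := ℕ) (σ := σ)
    obtain ⟨τ, hτ⟩ := ih (A := A - σ.permMatrix ℕ)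
      (fun i => by
        simp only [sub_apply]
        rw [sum_tsub_distrib _ fun j _ => hle i j, hr, sum_row_of_mem_doublyStochastic hP]
        rfl)
      (fun j => by
        simp only [sub_apply]
        rw [sum_tsub_distrib _ fun i _ => hle i j, hc, sum_col_of_mem_doublyStochastic hP]
        rfl)
    refine ⟨Fin.cons σ τ, ?_⟩
    rw [Fin.sum_univ_succ, Fin.cons_zero]
    simp only [Fin.cons_succ, ← hτ]
    ext i j
    exact (Nat.add_sub_cancel' (hle i j)).symm

end Matrix

section PermMatrixPair

variable {m : Type*} [DecidableEq m] {α β γ δ : Perm m}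

theorem eq_and_eq_or_eq_and_eq_of_permMatrix_add_eq
    (h : α.permMatrix ℕ + β.permMatrix ℕ = γ.permMatrix ℕ + δ.permMatrix ℕ) (i : m) :
    (γ i = α i ∧ δ i = β i) ∨ (γ i = β i ∧ δ i = α i) := by
  have row (j : m) := congrFun (congrFun h i) j
  simp only [Matrix.add_apply, Matrix.permMatrix_apply] at row
  grind [row (α i), row (β i), row (γ i), row (δ i)]

theorem isConj_of_permMatrix_add_eq [Fintype m]
    (h : α.permMatrix ℕ + β.permMatrix ℕ = γ.permMatrix ℕ + δ.permMatrix ℕ) :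
    IsConj (β⁻¹ * α) (δ⁻¹ * γ) := by
  have hcases := eq_and_eq_or_eq_and_eq_of_permMatrix_add_eq h
  have hβ (i : m) : β ((β⁻¹ * α) i) = α i := by simp
  let p (i : m) : Prop := γ i = α i ∧ δ i = β i
  have hp (i : m) : p ((β⁻¹ * α) i) ↔ p i := by
    constructor
    · intro hpi
      rcases hcases i with hi | ⟨hγ, hδ⟩
      · exact hi
      · have hfix : (β⁻¹ * α) i = i := δ.injective (by rw [hpi.2, hβ, hδ])
        have hαβ : α i = β i := by rw [← hβ i, hfix]
        exact ⟨hγ.trans hαβ.symm, hδ.trans hαβ⟩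
    · intro hpi
      rcases hcases ((β⁻¹ * α) i) with hi | ⟨hγ, -⟩
      · exact hi
      · have hfix : (β⁻¹ * α) i = i := γ.injective (by rw [hγ, hβ, hpi.1])
        rwa [hfix]
  classical
  rw [Perm.isConj_iff_cycleType_eq]
  refine (Perm.cycleType_of_eqOn_of_eqOn_inv p hp (fun i hi => ?_) (fun i hi => ?_)).symm
  · rw [Perm.mul_apply, hi.1, Perm.inv_eq_iff_eq, ← hβ i, ((hp i).2 hi).2]
  · have hγδ := (hcases i).resolve_left hi
    set j := (β⁻¹ * α)⁻¹ i
    have hπj : (β⁻¹ * α) j = i := by simp [j]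
    have hj : ¬ p j := by rwa [← hp, hπj]
    have hδj : δ j = γ i := by
      rw [((hcases j).resolve_left hj).2, hγδ.1, ← hβ j, hπj]
    rw [Perm.mul_apply, ← hδj, Perm.coe_inv, symm_apply_apply]
end PermMatrixPair

/-- Rows and columns of `pathMat k` in the order in which its cycle visits them: the even rows
upwards, then the odd rows downwards. -/
noncomputable def pathRowPerm (k : ℕ) : Perm (Fin k) :=
  Equiv.ofBijective
    (fun p => ⟨if 2 * p < k then 2 * p else 2 * k - 1 - 2 * p, by split_ifs <;> omega⟩)
    (Finite.injective_iff_bijective.1 fun p q h => by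
      simp only [Fin.mk.injEq] at h
      ext
      split_ifs at h <;> omega)

noncomputable def pathColPerm (k : ℕ) : Perm (Fin k) :=
  Equiv.ofBijective
    (fun q => ⟨if (q : ℕ) = 0 then 0 else if 2 * q - 1 < k then 2 * q - 1 else 2 * k - 2 * q,
      by split_ifs <;> omega⟩)
    (Finite.injective_iff_bijective.1 fun p q h => by
      simp only [Fin.mk.injEq] at h
      ext
      split_ifs at h <;> omega)

theorem pathMat_submatrix_pathRowPerm_pathColPerm (k : ℕ) :
    (pathMat k).submatrix (pathRowPerm k) (pathColPerm k) =
      (1 : Perm (Fin k)).permMatrix ℕ + (finRotate k).permMatrix ℕ := by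
  ext p q
  obtain _ | k := k
  · exact p.elim0
  have hp := p.isLt
  have hq := q.isLt
  have hrot : (p : ℕ) = k ∧ (finRotate (k + 1) p : ℕ) = 0 ∨
      (p : ℕ) < k ∧ (finRotate (k + 1) p : ℕ) = p + 1 := by
    rw [finRotate_apply, Fin.val_add_one]
    split_ifs with h <;> simp [Fin.ext_iff] at h <;> omega
  have hρ : 2 * (p : ℕ) < k + 1 ∧ (pathRowPerm (k + 1) p : ℕ) = 2 * p ∨
      k + 1 ≤ 2 * (p : ℕ) ∧ (pathRowPerm (k + 1) p : ℕ) = 2 * k + 1 - 2 * p := by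
    simp only [pathRowPerm, ofBijective_apply]
    split_ifs <;> omega
  have hκ : (q : ℕ) = 0 ∧ (pathColPerm (k + 1) q : ℕ) = 0 ∨
      2 * (q : ℕ) < k + 2 ∧ (pathColPerm (k + 1) q : ℕ) = 2 * q - 1 ∨
      k + 2 ≤ 2 * (q : ℕ) ∧ (pathColPerm (k + 1) q : ℕ) = 2 * k + 2 - 2 * q := by
    simp only [pathColPerm, ofBijective_apply]
    split_ifs <;> omega
  simp only [pathMat, submatrix_apply, Matrix.add_apply, Matrix.permMatrix_apply, Perm.one_apply,
    Fin.ext_iff]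
  generalize (pathRowPerm (k + 1) p : ℕ) = r at *
  generalize (pathColPerm (k + 1) q : ℕ) = c at *
  generalize (finRotate (k + 1) p : ℕ) = s at *
  split_ifs <;> omega

section HasCycleType

variable {m m' : Type*} [Fintype m] [DecidableEq m] [Fintype m'] [DecidableEq m']

/-- The parts of `M` are the numbers of rows in the connected blocks of `A`. -/
def HasCycleType (A : Matrix m m ℕ) (M : Multiset ℕ) : Prop :=
  ∃ α β : Perm m, A = α.permMatrix ℕ + β.permMatrix ℕ ∧ (β⁻¹ * α).partition.parts = M

variable {A : Matrix m m ℕ} {M : Multiset ℕ}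

theorem HasCycleType.unique {M' : Multiset ℕ} (hM : HasCycleType A M) (hM' : HasCycleType A M') :
    M = M' := by
  obtain ⟨α, β, rfl, rfl⟩ := hM
  obtain ⟨γ, δ, h, rfl⟩ := hM'
  rw [Perm.partition_eq_of_isConj.1 (isConj_of_permMatrix_add_eq h)]

theorem HasCycleType.submatrix (hA : HasCycleType A M) (σ τ : Perm m) :
    HasCycleType (A.submatrix σ τ) M := by
  obtain ⟨α, β, rfl, rfl⟩ := hA
  refine ⟨τ⁻¹ * α * σ, τ⁻¹ * β * σ, by
    rw [submatrix_add, Pi.add_apply, Pi.add_apply, permMatrix_submatrix, permMatrix_submatrix], ?_⟩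
  have hconj : (τ⁻¹ * β * σ)⁻¹ * (τ⁻¹ * α * σ) = σ⁻¹ * (β⁻¹ * α) * σ⁻¹⁻¹ := by group
  rw [hconj, Perm.partition_conj]

theorem HasCycleType.submatrix_equiv (hA : HasCycleType A M) (e : m' ≃ m) :
    HasCycleType (A.submatrix e e) M := by
  obtain ⟨α, β, rfl, rfl⟩ := hA
  refine ⟨e.symm.permCongr α, e.symm.permCongr β, by
    rw [submatrix_add, Pi.add_apply, Pi.add_apply, permMatrix_submatrix_equiv,
      permMatrix_submatrix_equiv], ?_⟩
  have hconj : (e.symm.permCongr β)⁻¹ * e.symm.permCongr α = e.symm.permCongr (β⁻¹ * α) := by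
    simp only [← permCongrHom_coe, map_mul, map_inv]
  rw [hconj, Perm.parts_partition_permCongr]

theorem HasCycleType.fromBlocks {B : Matrix m' m' ℕ} {N : Multiset ℕ} (hA : HasCycleType A M)
    (hB : HasCycleType B N) : HasCycleType (fromBlocks A 0 0 B) (M + N) := by
  obtain ⟨α, β, rfl, rfl⟩ := hA
  obtain ⟨γ, δ, rfl, rfl⟩ := hB
  refine ⟨Perm.sumCongr α γ, Perm.sumCongr β δ, ?_, ?_⟩
  · simp only [← fromBlocks_permMatrix, fromBlocks_add, add_zero]
  · rw [Perm.sumCongr_inv, Perm.sumCongr_mul, Perm.parts_partition_sumCongr]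

theorem HasCycleType.transpose (hA : HasCycleType A M) : HasCycleType Aᵀ M := by
  obtain ⟨α, β, rfl, rfl⟩ := hA
  refine ⟨α⁻¹, β⁻¹, by rw [transpose_add, transpose_permMatrix, transpose_permMatrix], ?_⟩
  have hconj : β⁻¹⁻¹ * α⁻¹ = (α * (β⁻¹ * α) * α⁻¹)⁻¹ := by group
  rw [hconj, Perm.partition_inv, Perm.partition_conj]

theorem HasCycleType.sum_row (hA : HasCycleType A M) (i : m) : ∑ j, A i j = 2 := by
  obtain ⟨α, β, rfl, -⟩ := hA
  simp only [Matrix.add_apply, sum_add_distrib,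
    sum_row_of_mem_doublyStochastic permMatrix_mem_doublyStochastic, one_add_one_eq_two]

theorem HasCycleType.sum_col (hA : HasCycleType A M) (j : m) : ∑ i, A i j = 2 := by
  obtain ⟨α, β, rfl, -⟩ := hA
  simp only [Matrix.add_apply, sum_add_distrib,
    sum_col_of_mem_doublyStochastic permMatrix_mem_doublyStochastic, one_add_one_eq_two]

theorem exists_hasCycleType (hr : ∀ i, ∑ j, A i j = 2) (hc : ∀ j, ∑ i, A i j = 2) :
    ∃ M, HasCycleType A M := by
  obtain ⟨σ, rfl⟩ := exists_eq_sum_permMatrix hr hc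
  exact ⟨_, σ 0, σ 1, Fin.sum_univ_two _, rfl⟩

theorem hasCycleType_one_add_finRotate {k : ℕ} (hk : 0 < k) :
    HasCycleType ((1 : Perm (Fin k)).permMatrix ℕ + (finRotate k).permMatrix ℕ) {k} := by
  refine ⟨1, finRotate k, rfl, ?_⟩
  rw [mul_one, Perm.partition_inv, Perm.parts_partition_finRotate hk]

theorem hasCycleType_pathMat {k : ℕ} (hk : 0 < k) : HasCycleType (pathMat k) {k} := by
  have h := ((hasCycleType_one_add_finRotate hk).submatrix (pathRowPerm k)⁻¹ (pathColPerm k)⁻¹)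
  rwa [← pathMat_submatrix_pathRowPerm_pathColPerm, submatrix_submatrix, ← Perm.coe_mul,
    ← Perm.coe_mul, mul_inv_cancel, mul_inv_cancel, Perm.coe_one, submatrix_id_id] at h

theorem hasCycleType_listMat : ∀ L : List ℕ, (∀ k ∈ L, 0 < k) → HasCycleType (listMat L) L
  | [], _ => ⟨1, 1, by ext i; exact i.elim0, rfl⟩
  | k :: L, hL => by
    rw [listMat, ← Multiset.cons_coe, ← Multiset.singleton_add]
    exact ((hasCycleType_pathMat (hL k List.mem_cons_self)).fromBlocks
      (hasCycleType_listMat L fun k hk => hL k (List.mem_cons_of_mem _ hk))).submatrix_equiv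
      ((finCongr List.sum_cons).trans finSumFinEquiv.symm)

theorem hasCycleType_canonP {n : ℕ} (μ : n.Partition) : HasCycleType (canonP μ) μ.parts := by
  have h := (hasCycleType_listMat _ fun k hk => μ.parts_pos (Multiset.mem_toList.1 hk))
    |>.submatrix_equiv (finCongr (by simp [μ.parts_sum] : n = μ.parts.toList.sum))
  rwa [Multiset.coe_toList] at h

end HasCycleType

section PermEquiv

variable {n : ℕ} {A B C : Matrix (Fin n) (Fin n) ℕ} {M : Multiset ℕ}

theorem permEquiv_refl (A : Matrix (Fin n) (Fin n) ℕ) : permEquiv A A :=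
  ⟨1, 1, fun _ _ => rfl⟩

theorem permEquiv_symm (h : permEquiv A B) : permEquiv B A := by
  obtain ⟨σ, τ, h⟩ := h
  exact ⟨σ⁻¹, τ⁻¹, fun i j => by simp [h]⟩

theorem permEquiv_trans (hAB : permEquiv A B) (hBC : permEquiv B C) : permEquiv A C := by
  obtain ⟨σ, τ, hAB⟩ := hAB
  obtain ⟨σ', τ', hBC⟩ := hBC
  exact ⟨σ * σ', τ * τ', fun i j => by rw [hBC, hAB]; rfl⟩

theorem setOf_permEquiv_eq (h : permEquiv A B) : {C | permEquiv A C} = {C | permEquiv B C} :=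
  Set.ext fun _ => ⟨permEquiv_trans (permEquiv_symm h), permEquiv_trans h⟩

theorem HasCycleType.of_permEquiv (hA : HasCycleType A M) (h : permEquiv A B) :
    HasCycleType B M := by
  obtain ⟨σ, τ, h⟩ := h
  convert hA.submatrix σ τ
  ext i j
  exact h i j

theorem permEquiv_of_hasCycleType (hA : HasCycleType A M) (hB : HasCycleType B M) :
    permEquiv A B := by
  obtain ⟨α, β, rfl, hM⟩ := hA
  obtain ⟨γ, δ, rfl, rfl⟩ := hB
  obtain ⟨c, hc⟩ := isConj_iff.1 (Perm.partition_eq_of_isConj.2 (Nat.Partition.ext hM))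
  refine ⟨c⁻¹, β * c⁻¹ * δ⁻¹, fun i j => ?_⟩
  have hγ : (β * c⁻¹ * δ⁻¹)⁻¹ * α * c⁻¹ = γ := by
    rw [← mul_inv_cancel_left δ γ, ← hc]
    group
  have hδ : (β * c⁻¹ * δ⁻¹)⁻¹ * β * c⁻¹ = δ := by group
  rw [← submatrix_apply (α.permMatrix ℕ + β.permMatrix ℕ), submatrix_add, Pi.add_apply,
    Pi.add_apply, permMatrix_submatrix, permMatrix_submatrix, hγ, hδ]

theorem HasCycleType.exists_partition (hA : HasCycleType A M) :
    ∃ μ : n.Partition, μ.parts = M := by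
  obtain ⟨α, β, -, rfl⟩ := hA
  exact ⟨⟨_, (β⁻¹ * α).partition.parts_pos, by simpa using (β⁻¹ * α).partition.parts_sum⟩, rfl⟩

end PermEquiv

theorem stmt15_general (n : ℕ) :
    ∃ Φ : n.Partition → {C : Set (Matrix (Fin n) (Fin n) ℕ) //
        ∃ A, (((∀ i, ∑ j, A i j = 2) ∧ (∀ j, ∑ i, A i j = 2)) ∧ permEquiv A Aᵀ) ∧
          C = {B | permEquiv A B}},
      Function.Bijective Φ ∧ ∀ μ : n.Partition, canonP μ ∈ (Φ μ : Set _) := by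
  have hT := @hasCycleType_canonP n
  refine ⟨fun μ => ⟨{B | permEquiv (canonP μ) B}, canonP μ,
    ⟨⟨(hT μ).sum_row, (hT μ).sum_col⟩, permEquiv_of_hasCycleType (hT μ) (hT μ).transpose⟩, rfl⟩,
    ⟨fun μ ν h => ?_, ?_⟩, fun μ => permEquiv_refl _⟩
  · have hset : {B | permEquiv (canonP μ) B} = {B | permEquiv (canonP ν) B} :=
      congrArg Subtype.val h
    have hμν : canonP ν ∈ {B | permEquiv (canonP μ) B} := hset ▸ permEquiv_refl _
    exact Nat.Partition.ext (((hT μ).of_permEquiv hμν).unique (hT ν))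
  · rintro ⟨_, A, ⟨⟨hr, hc⟩, -⟩, rfl⟩
    obtain ⟨M, hM⟩ := exists_hasCycleType hr hc
    obtain ⟨μ, rfl⟩ := hM.exists_partition
    exact ⟨μ, Subtype.ext (setOf_permEquiv_eq (permEquiv_of_hasCycleType (hT μ) hM))⟩

/-- every class in `T(n,2)/∼` decomposes uniquely as a direct sum of
irreducible classes, the irreducible classes of size `k` being represented by `pathMat k`;
equivalently, sending a partition `μ ⊢ n` to the class of the block-diagonal matrix with
blocks `pathMat k` over the parts `k` of `μ` is a bijection from partitions of `n` onto
`T(n,2)/∼`. -/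
theorem stmt15 (n : ℕ) (hn : 0 < n) :
    ∃ Φ : n.Partition → {C : Set (Matrix (Fin n) (Fin n) ℕ) //
        ∃ A, (((∀ i, ∑ j, A i j = 2) ∧ (∀ j, ∑ i, A i j = 2)) ∧ permEquiv A Aᵀ) ∧
          C = {B | permEquiv A B}},
      Function.Bijective Φ ∧ ∀ μ : n.Partition, canonP μ ∈ (Φ μ : Set _) :=
  stmt15_general n
end

section
/- For positive integers n, the number of equivalence classes in T(n,2)/∼, i.e., the number of permutation-equivalence classes of n×n non-negative integer matrices with all row and column sums 2 that are permutation equivalent to their transpose, equals the number of partitions of n. -/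
/-!
By König's theorem a non-negative integer matrix with all line sums `2` is a sum `P_a + P_b` of two
permutation matrices, and permuting its rows by `a⁻¹` brings it to the form `1 + P_σ`. Two matrices
`1 + P_σ` and `1 + P_τ` are permutation equivalent exactly when `σ` and `τ` are conjugate: row by
row, `1 + P_τ = P_a + P_b` forces `b a⁻¹` to agree with `τ` on the fixed points of `a` and with `τ⁻¹`
off them, and both sets are `τ`-invariant. As `σ⁻¹` is conjugate to `σ`, every class is equivalent
to its transpose, and the classes are in bijection with the conjugacy classes of `Sₙ`, that is,
with the cycle types of permutations of `n` points.
-/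

open Matrix

open Equiv

theorem Nat.card_conjClasses_eq_of_surjective {G β : Type*} [Group G] {f : G → β}
    (hf : Function.Surjective f) (hfib : ∀ a b, f a = f b ↔ IsConj a b) :
    Nat.card (ConjClasses G) = Nat.card β :=
  Nat.card_congr ((Quotient.congrRight fun a b => (hfib a b).symm).trans
    (Setoid.quotientKerEquivOfSurjective f hf))

namespace Equiv.Perm

variable {ι : Type*}

theorem isConj_subtypeCongr {p : ι → Prop} [DecidablePred p] {e f : Perm {x // p x}}
    {e' f' : Perm {x // ¬p x}} (h : IsConj e f) (h' : IsConj e' f') :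
    IsConj (e.subtypeCongr e') (f.subtypeCongr f') := by
  obtain ⟨c, rfl⟩ := isConj_iff.1 h
  obtain ⟨c', rfl⟩ := isConj_iff.1 h'
  have hpair : IsConj (e, e') (c * e * c⁻¹, c' * e' * c'⁻¹) := isConj_iff.2 ⟨(c, c'), rfl⟩
  exact (subtypeCongrHom p).map_isConj hpair

variable [DecidableEq ι] [Fintype ι]

theorem isConj_inv (σ : Perm ι) : IsConj σ σ⁻¹ :=
  isConj_iff_cycleType_eq.2 (cycleType_inv σ).symm

theorem isConj_of_eq_on_of_eq_inv_off {c τ : Perm ι} (p : ι → Prop) [DecidablePred p]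
    (hp : ∀ x, p (τ x) ↔ p x) (hc : ∀ x, p x → c x = τ x) (hc' : ∀ x, ¬p x → c x = τ⁻¹ x) :
    IsConj c τ := by
  have hp' : ∀ x, ¬p (τ x) ↔ ¬p x := fun x => not_congr (hp x)
  have hτ : τ = (τ.subtypePerm hp).subtypeCongr (τ.subtypePerm hp') := by
    ext x
    by_cases hx : p x <;> simp [hx]
  have hc : c = (τ.subtypePerm hp).subtypeCongr (τ.subtypePerm hp')⁻¹ := by
    ext x
    by_cases hx : p x <;> simp [hx, hc, hc']
  rw [hτ, hc]
  exact isConj_subtypeCongr (.refl _) (isConj_inv _).symm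

theorem isConj_mul_inv_of_permMatrix_add_eq {a b τ : Perm ι}
    (h : a.permMatrix ℕ + b.permMatrix ℕ = 1 + τ.permMatrix ℕ) : IsConj (b * a⁻¹) τ := by
  -- row `i` of `h` says that `{a i, b i} = {i, τ i}` as multisets
  have hrow : ∀ i, a i = i ∧ b i = τ i ∨ a i = τ i ∧ b i = i := by
    intro i
    have hi := fun j => congrFun₂ h i j
    simp only [Matrix.add_apply, Matrix.one_apply, PEquiv.toMatrix_apply, toPEquiv_apply,
      Option.mem_def, Option.some.injEq] at hi
    have := hi i; have := hi (a i); have := hi (b i)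
    grind
  have hinv : ∀ x, a (τ x) = τ x ↔ a x = x := fun x => by
    grind [hrow x, hrow (τ x), a.injective, b.injective]
  refine isConj_of_eq_on_of_eq_inv_off (fun x => a x = x) hinv (fun x hx => ?_) (fun x hx => ?_)
  · rw [mul_apply, inv_eq_iff_eq.2 hx.symm]
    grind [hrow x]
  · obtain ⟨y, rfl⟩ := τ.surjective x
    have hy : ¬a y = y := by rwa [← hinv]
    rcases hrow y with h | ⟨hay, hby⟩
    · exact absurd h.1 hy
    · rw [mul_apply, inv_eq_iff_eq.2 hay.symm, hby]
      exact (inv_eq_iff_eq.2 rfl).symm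

theorem partition_surjective :
    Function.Surjective (partition : Perm ι → (Fintype.card ι).Partition) := by
  intro P
  set big := P.parts.filter (fun a => 2 ≤ a)
  set ones := P.parts.filter (fun a => ¬2 ≤ a)
  have hP : big + ones = P.parts := Multiset.filter_add_not _ P.parts
  have hones : ones = Multiset.replicate ones.card 1 :=
    Multiset.eq_replicate_card.2 fun a ha => by
      have := P.parts_pos (Multiset.mem_filter.1 ha).1
      have := (Multiset.mem_filter.1 ha).2
      omega
  have hsum : big.sum + ones.card = Fintype.card ι := by
    rw [← P.parts_sum, ← hP, Multiset.sum_add, hones, Multiset.sum_replicate, smul_eq_mul, mul_one,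
      Multiset.card_replicate]
  obtain ⟨σ, hσ⟩ := (exists_with_cycleType_iff ι (m := big)).2
    ⟨by omega, fun a ha => (Multiset.mem_filter.1 ha).2⟩
  refine ⟨σ, Nat.Partition.ext ?_⟩
  rw [parts_partition, ← sum_cycleType, hσ, show Fintype.card ι - big.sum = ones.card by omega,
    ← hones, hP]

end Equiv.Perm

namespace Matrix

variable {ι : Type*} [DecidableEq ι]

theorem submatrix_permMatrix {R : Type*} [Zero R] [One R] (σ ρ π : Perm ι) :
    (σ.permMatrix R).submatrix ρ π = (π⁻¹ * σ * ρ).permMatrix R := by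
  ext i j
  simp [eq_symm_apply, eq_comm]

variable [Fintype ι]

theorem exists_perm_forall_ne_zero_of_sum_eq {A : Matrix ι ι ℕ} {k : ℕ} (hk : k ≠ 0)
    (hrow : ∀ i, ∑ j, A i j = k) (hcol : ∀ j, ∑ i, A i j = k) :
    ∃ σ : Perm ι, ∀ i, A i (σ i) ≠ 0 := by
  let M : Matrix ι ι ℚ := (k : ℚ)⁻¹ • A.map (↑)
  have hM : M ∈ doublyStochastic ℚ ι := by
    refine mem_doublyStochastic_iff_sum.2 ⟨fun i j => ?_, fun i => ?_, fun j => ?_⟩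
    · simp only [M, Matrix.smul_apply, Matrix.map_apply, smul_eq_mul]
      positivity
    · simp [M, ← Finset.mul_sum, ← Nat.cast_sum, hrow, hk]
    · simp [M, ← Finset.mul_sum, ← Nat.cast_sum, hcol, hk]
  obtain ⟨w, hw0, hw1, hwM⟩ := exists_eq_sum_perm_of_mem_doublyStochastic hM
  obtain ⟨σ, hσ⟩ : ∃ σ, w σ ≠ 0 := by
    by_contra! h
    simp [h] at hw1
  refine ⟨σ, fun i hi => hσ (le_antisymm ?_ (hw0 σ))⟩
  have hMi : M i (σ i) = 0 := by simp [M, hi]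
  calc w σ = w σ • σ.permMatrix ℚ i (σ i) := by simp
    _ ≤ ∑ τ, w τ • τ.permMatrix ℚ i (σ i) :=
      Finset.single_le_sum (f := fun τ => w τ • τ.permMatrix ℚ i (σ i))
        (fun τ _ => smul_nonneg (hw0 τ)
          (nonneg_of_mem_doublyStochastic permMatrix_mem_doublyStochastic))
        (Finset.mem_univ σ)
    _ = 0 := by rw [← hMi, ← hwM, Matrix.sum_apply]; rfl

theorem exists_sum_permMatrix_eq_of_sum_eq {A : Matrix ι ι ℕ} {k : ℕ}
    (hrow : ∀ i, ∑ j, A i j = k) (hcol : ∀ j, ∑ i, A i j = k) :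
    ∃ s : Multiset (Perm ι), Multiset.card s = k ∧ (s.map (·.permMatrix ℕ)).sum = A := by
  induction k generalizing A with
  | zero =>
    refine ⟨0, rfl, ?_⟩
    ext i j
    simpa using (Finset.sum_eq_zero_iff.1 (hrow i) j (Finset.mem_univ _)).symm
  | succ k ih =>
    obtain ⟨σ, hσ⟩ := exists_perm_forall_ne_zero_of_sum_eq k.succ_ne_zero hrow hcol
    have hle : ∀ i j, σ.permMatrix ℕ i j ≤ A i j := by
      intro i j
      have := hσ i
      simp only [PEquiv.toMatrix_apply, toPEquiv_apply, Option.mem_def, Option.some.injEq]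
      split_ifs with h <;> [subst h; skip] <;> omega
    have hP := permMatrix_mem_doublyStochastic (R := ℕ) (σ := σ)
    obtain ⟨s, hs, hsA⟩ := ih (A := A - σ.permMatrix ℕ)
      (fun i => by
        simp only [Matrix.sub_apply]
        rw [Finset.sum_tsub_distrib _ fun j _ => hle i j, hrow, sum_row_of_mem_doublyStochastic hP]
        rfl)
      (fun j => by
        simp only [Matrix.sub_apply]
        rw [Finset.sum_tsub_distrib _ fun i _ => hle i j, hcol, sum_col_of_mem_doublyStochastic hP]
        rfl)
    refine ⟨σ ::ₘ s, by simp [hs], ?_⟩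
    ext i j
    rw [Multiset.map_cons, Multiset.sum_cons, hsA, Matrix.add_apply, Matrix.sub_apply]
    have := hle i j
    omega

end Matrix

section PermEquiv

variable {n : ℕ}

theorem permEquiv_iff {A B : Matrix (Fin n) (Fin n) ℕ} :
    permEquiv A B ↔ ∃ σ τ : Perm (Fin n), B = A.submatrix σ τ := by
  simp only [permEquiv, ← Matrix.ext_iff, submatrix_apply]

theorem permEquiv_equivalence : Equivalence (permEquiv (n := n)) where
  refl _ := ⟨1, 1, fun _ _ => rfl⟩
  symm := by
    rintro A B ⟨σ, τ, h⟩
    exact ⟨σ⁻¹, τ⁻¹, fun i j => by simp [h]⟩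
  trans := by
    rintro A B C ⟨σ, τ, h⟩ ⟨σ', τ', h'⟩
    exact ⟨σ * σ', τ * τ', fun i j => by simp [h, h']⟩

theorem setOf_permEquiv_eq_iff {A A' : Matrix (Fin n) (Fin n) ℕ} :
    {B | permEquiv A B} = {B | permEquiv A' B} ↔ permEquiv A A' := by
  refine ⟨fun h => (Set.ext_iff.1 h A').2 (permEquiv_equivalence.refl A'), fun h => ?_⟩
  ext B
  exact ⟨permEquiv_equivalence.trans (permEquiv_equivalence.symm h), permEquiv_equivalence.trans h⟩

theorem submatrix_one_add_permMatrix (σ ρ π : Perm (Fin n)) :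
    (1 + σ.permMatrix ℕ).submatrix ρ π = (π⁻¹ * ρ).permMatrix ℕ + (π⁻¹ * σ * ρ).permMatrix ℕ := by
  rw [← permMatrix_one]
  simp only [submatrix_add, Pi.add_apply, submatrix_permMatrix, mul_one]

theorem permEquiv_one_add_permMatrix_iff {σ τ : Perm (Fin n)} :
    permEquiv (1 + σ.permMatrix ℕ) (1 + τ.permMatrix ℕ) ↔ IsConj σ τ := by
  rw [permEquiv_iff]
  constructor
  · rintro ⟨ρ, π, h⟩
    rw [submatrix_one_add_permMatrix] at h
    have hconj := Perm.isConj_mul_inv_of_permMatrix_add_eq h.symm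
    rw [show π⁻¹ * σ * ρ * (π⁻¹ * ρ)⁻¹ = π⁻¹ * σ * π⁻¹⁻¹ by group] at hconj
    exact (isConj_iff.2 ⟨π⁻¹, rfl⟩).trans hconj
  · intro h
    obtain ⟨g, rfl⟩ := isConj_iff.1 h
    refine ⟨g⁻¹, g⁻¹, ?_⟩
    rw [submatrix_one_add_permMatrix, inv_inv, mul_inv_cancel, permMatrix_one]

theorem exists_permEquiv_one_add_permMatrix {A : Matrix (Fin n) (Fin n) ℕ}
    (hrow : ∀ i, ∑ j, A i j = 2) (hcol : ∀ j, ∑ i, A i j = 2) :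
    ∃ σ : Perm (Fin n), permEquiv A (1 + σ.permMatrix ℕ) := by
  obtain ⟨s, hs, rfl⟩ := exists_sum_permMatrix_eq_of_sum_eq hrow hcol
  obtain ⟨a, b, rfl⟩ := Multiset.card_eq_two.1 hs
  refine ⟨b * a⁻¹, permEquiv_iff.2 ⟨a⁻¹, 1, ?_⟩⟩
  simp only [Multiset.insert_eq_cons, Multiset.map_cons, Multiset.map_singleton,
    Multiset.sum_cons, Multiset.sum_singleton, submatrix_add, Pi.add_apply,
    submatrix_permMatrix, inv_one, one_mul, mul_inv_cancel, permMatrix_one]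

theorem sum_one_add_permMatrix_row (σ : Perm (Fin n)) (i : Fin n) :
    ∑ j, (1 + σ.permMatrix ℕ) i j = 2 := by
  rw [← permMatrix_one]
  simp only [Matrix.add_apply, Finset.sum_add_distrib,
    sum_row_of_mem_doublyStochastic permMatrix_mem_doublyStochastic, one_add_one_eq_two]

theorem sum_one_add_permMatrix_col (σ : Perm (Fin n)) (j : Fin n) :
    ∑ i, (1 + σ.permMatrix ℕ) i j = 2 := by
  rw [← permMatrix_one]
  simp only [Matrix.add_apply, Finset.sum_add_distrib,
    sum_col_of_mem_doublyStochastic permMatrix_mem_doublyStochastic, one_add_one_eq_two]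

theorem permEquiv_one_add_permMatrix_transpose (σ : Perm (Fin n)) :
    permEquiv (1 + σ.permMatrix ℕ) (1 + σ.permMatrix ℕ)ᵀ := by
  rw [transpose_add, transpose_one, transpose_permMatrix]
  exact permEquiv_one_add_permMatrix_iff.2 (Perm.isConj_inv σ)

end PermEquiv

/-- The quotient `T(n,2)/∼`, each class represented by the set of its members. -/
abbrev SelfTransposeClass (n : ℕ) :=
  {C : Set (Matrix (Fin n) (Fin n) ℕ) //
    ∃ A, (((∀ i, ∑ j, A i j = 2) ∧ (∀ j, ∑ i, A i j = 2)) ∧ permEquiv A Aᵀ) ∧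
      C = {B | permEquiv A B}}

namespace SelfTransposeClass

variable {n : ℕ}

def ofPerm (σ : Perm (Fin n)) : SelfTransposeClass n :=
  ⟨{B | permEquiv (1 + σ.permMatrix ℕ) B}, 1 + σ.permMatrix ℕ,
    ⟨⟨sum_one_add_permMatrix_row σ, sum_one_add_permMatrix_col σ⟩,
      permEquiv_one_add_permMatrix_transpose σ⟩, rfl⟩

theorem ofPerm_surjective : Function.Surjective (ofPerm (n := n)) := by
  rintro ⟨_, A, ⟨⟨hrow, hcol⟩, -⟩, rfl⟩
  obtain ⟨σ, hσ⟩ := exists_permEquiv_one_add_permMatrix hrow hcol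
  exact ⟨σ, Subtype.ext (setOf_permEquiv_eq_iff.2 (permEquiv_equivalence.symm hσ))⟩

theorem ofPerm_eq_ofPerm_iff {σ τ : Perm (Fin n)} : ofPerm σ = ofPerm τ ↔ IsConj σ τ := by
  rw [← permEquiv_one_add_permMatrix_iff, ← setOf_permEquiv_eq_iff, ofPerm, ofPerm, Subtype.mk.injEq]

end SelfTransposeClass

theorem stmt16_general (n : ℕ) :
    Nat.card {C : Set (Matrix (Fin n) (Fin n) ℕ) //
        ∃ A, (((∀ i, ∑ j, A i j = 2) ∧ (∀ j, ∑ i, A i j = 2)) ∧ permEquiv A Aᵀ) ∧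
          C = {B | permEquiv A B}} =
      Nat.card (Nat.Partition n) := by
  calc _ = Nat.card (ConjClasses (Perm (Fin n))) :=
        (Nat.card_conjClasses_eq_of_surjective SelfTransposeClass.ofPerm_surjective
          fun _ _ => SelfTransposeClass.ofPerm_eq_ofPerm_iff).symm
    _ = Nat.card (Fintype.card (Fin n)).Partition :=
        Nat.card_conjClasses_eq_of_surjective Perm.partition_surjective
          fun _ _ => Perm.partition_eq_of_isConj.symm
    _ = Nat.card (Nat.Partition n) := by rw [Fintype.card_fin]

/-- the number of permutation-equivalence classes of `n × n` non-negative
integer matrices with all row and column sums `2` that are permutation equivalent to their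
transpose equals the number of partitions of `n`. -/
theorem stmt16 (n : ℕ) (hn : 0 < n) :
    Nat.card {C : Set (Matrix (Fin n) (Fin n) ℕ) //
        ∃ A, (((∀ i, ∑ j, A i j = 2) ∧ (∀ j, ∑ i, A i j = 2)) ∧ permEquiv A Aᵀ) ∧
          C = {B | permEquiv A B}} =
      Nat.card (Nat.Partition n) :=
  stmt16_general n
end

section
/- For positive integers n and m, the value #{A ∈ M(n,m) : A = A^T}, i.e., the number of n×n symmetric non-negative integer matrices with all row sums equal to m, equals the number of distinct irreducible constituents (counted with multiplicity) in the S_{nm}-character Ind_{S_m^n}^{S_{nm}} 1 — equivalently, Σ_{ν ⊢ nm} K_{ν, m^n} where K are Kostka numbers. -/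
/-!
Symmetric RSK through Fomin's growth diagrams. The corners `(i, j)` of an `n × n` matrix `A`
are labelled by partitions, the one at `(i + 1, j + 1)` being computed from its three
neighbours closer to the origin and the entry `A i j` by a local rule that is invertible and
symmetric in the two neighbours. If `A` is symmetric, so is its growth diagram, which is then
determined by its last row: a chain `∅ = λ⁰ ⊆ λ¹ ⊆ ⋯ ⊆ λⁿ` in which `λʲ⁺¹ / λʲ` is a
horizontal strip of size the `j`-th column sum `m`. Conversely every such chain arises, by
running the inverse rule from the last row and column towards the origin. Such chains are
exactly the semistandard tableaux of shape `λⁿ` and content `mⁿ`: the cells of `λᵗ⁺¹ / λᵗ`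
carry the entry `t`.
-/

open Matrix Finset

-- Partitions are encoded by their row-length functions `ℕ → ℕ`.
structure IsHorizStrip (μ ρ : ℕ → ℕ) : Prop where
  le : ∀ k, μ k ≤ ρ k
  interlace : ∀ k, ρ (k + 1) ≤ μ k

namespace IsHorizStrip

theorem antitone_right {μ ρ : ℕ → ℕ} (h : IsHorizStrip μ ρ) : Antitone ρ :=
  antitone_nat_of_succ_le fun k => (h.interlace k).trans (h.le k)

theorem refl_of_antitone {μ : ℕ → ℕ} (h : Antitone μ) : IsHorizStrip μ μ :=
  ⟨fun _ => le_rfl, fun k => h k.le_succ⟩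

theorem zero : IsHorizStrip 0 0 := refl_of_antitone antitone_const

end IsHorizStrip

-- RSK's local rule in row lengths: `a` cells enter the first row, and the
-- `min (μ k) (ν k) - l k` cells by which row `k` of both `μ` and `ν` exceeds `l` are bumped
-- into row `k + 1`.
def growth (l μ ν : ℕ → ℕ) (a : ℕ) : ℕ → ℕ
  | 0 => max (μ 0) (ν 0) + a
  | k + 1 => max (μ (k + 1)) (ν (k + 1)) + (min (μ k) (ν k) - l k)

def growthInvShape (ρ μ ν : ℕ → ℕ) : ℕ → ℕ :=
  fun k => min (μ k) (ν k) - (ρ (k + 1) - max (μ (k + 1)) (ν (k + 1)))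

def growthInvEntry (ρ μ ν : ℕ → ℕ) : ℕ := ρ 0 - max (μ 0) (ν 0)

section LocalRules

variable {l μ ν ρ : ℕ → ℕ}

theorem growth_comm (l μ ν : ℕ → ℕ) (a : ℕ) : growth l μ ν a = growth l ν μ a := by
  funext k; cases k <;> simp only [growth, max_comm, min_comm]

theorem growthInvShape_comm (ρ μ ν : ℕ → ℕ) : growthInvShape ρ μ ν = growthInvShape ρ ν μ := by
  funext k; simp only [growthInvShape, max_comm, min_comm]

theorem growthInvEntry_comm (ρ μ ν : ℕ → ℕ) : growthInvEntry ρ μ ν = growthInvEntry ρ ν μ := by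
  simp only [growthInvEntry, max_comm]

theorem IsHorizStrip.growth_left (hμ : IsHorizStrip l μ) (hν : IsHorizStrip l ν) (a : ℕ) :
    IsHorizStrip μ (growth l μ ν a) where
  le k := by cases k <;> simp only [growth] <;> omega
  interlace k := by
    have := hμ.le k; have := hν.le k; have := hμ.interlace k; have := hν.interlace k
    simp only [growth]; omega

theorem IsHorizStrip.growth_right (hμ : IsHorizStrip l μ) (hν : IsHorizStrip l ν) (a : ℕ) :
    IsHorizStrip ν (growth l μ ν a) :=
  growth_comm l μ ν a ▸ hν.growth_left hμ a

theorem IsHorizStrip.growthInvShape_left (hμ : IsHorizStrip μ ρ) (hν : IsHorizStrip ν ρ) :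
    IsHorizStrip (growthInvShape ρ μ ν) μ where
  le k := by simp only [growthInvShape]; omega
  interlace k := by
    have := hμ.le (k + 1); have := hν.le (k + 1); have := hμ.interlace k; have := hν.interlace k
    simp only [growthInvShape]; omega

theorem IsHorizStrip.growthInvShape_right (hμ : IsHorizStrip μ ρ) (hν : IsHorizStrip ν ρ) :
    IsHorizStrip (growthInvShape ρ μ ν) ν :=
  growthInvShape_comm ρ μ ν ▸ hν.growthInvShape_left hμ

theorem growth_growthInv (hμ : IsHorizStrip μ ρ) (hν : IsHorizStrip ν ρ) :
    growth (growthInvShape ρ μ ν) μ ν (growthInvEntry ρ μ ν) = ρ := by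
  funext k
  cases k with
  | zero => have := hμ.le 0; have := hν.le 0; simp only [growth, growthInvEntry]; omega
  | succ k =>
    have := hμ.le (k + 1); have := hν.le (k + 1); have := hμ.interlace k; have := hν.interlace k
    simp only [growth, growthInvShape]; omega

theorem growthInvShape_growth (hμ : IsHorizStrip l μ) (hν : IsHorizStrip l ν) (a : ℕ) :
    growthInvShape (growth l μ ν a) μ ν = l := by
  funext k
  have := hμ.le k; have := hν.le k; have := hμ.interlace k; have := hν.interlace k
  simp only [growthInvShape, growth]; omega

theorem growthInvEntry_growth (l μ ν : ℕ → ℕ) (a : ℕ) :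
    growthInvEntry (growth l μ ν a) μ ν = a := by
  simp only [growthInvEntry, growth]; omega

theorem sum_growth_add_sum (hμ : IsHorizStrip l μ) (hν : IsHorizStrip l ν) (a : ℕ) {N : ℕ}
    (hμN : μ N = 0) (hνN : ν N = 0) :
    ∑ k ∈ range (N + 1), growth l μ ν a k + ∑ k ∈ range (N + 1), l k =
      a + ∑ k ∈ range (N + 1), μ k + ∑ k ∈ range (N + 1), ν k := by
  have hstep : ∀ k,
      growth l μ ν a (k + 1) + l k = max (μ (k + 1)) (ν (k + 1)) + min (μ k) (ν k) := by
    intro k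
    have := hμ.le k; have := hν.le k; have := hμ.interlace k; have := hν.interlace k
    simp only [growth]; omega
  have hlN : l N = 0 := Nat.eq_zero_of_le_zero (hμN ▸ hμ.le N)
  have hρ := sum_range_succ' (growth l μ ν a) N
  have hl := sum_range_succ l N
  have hsteps : ∑ k ∈ range N, growth l μ ν a (k + 1) + ∑ k ∈ range N, l k =
      ∑ k ∈ range N, max (μ (k + 1)) (ν (k + 1)) + ∑ k ∈ range N, min (μ k) (ν k) := by
    rw [← sum_add_distrib, ← sum_add_distrib]; exact sum_congr rfl fun k _ => hstep k
  have hmax := sum_range_succ' (fun k => max (μ k) (ν k)) N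
  have hmin := sum_range_succ (fun k => min (μ k) (ν k)) N
  have hμν : ∑ k ∈ range (N + 1), μ k + ∑ k ∈ range (N + 1), ν k =
      ∑ k ∈ range (N + 1), max (μ k) (ν k) + ∑ k ∈ range (N + 1), min (μ k) (ν k) := by
    simp only [← sum_add_distrib, max_add_min]
  have hρ0 : growth l μ ν a 0 = max (μ 0) (ν 0) + a := rfl
  simp only [hμN, hνN, min_self] at hmin
  omega

end LocalRules

def growthDiagram (A : ℕ → ℕ → ℕ) : ℕ → ℕ → ℕ → ℕ
  | 0, _ => 0
  | _ + 1, 0 => 0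
  | i + 1, j + 1 =>
    growth (growthDiagram A i j) (growthDiagram A i (j + 1)) (growthDiagram A (i + 1) j) (A i j)

namespace growthDiagram

variable (A : ℕ → ℕ → ℕ)

@[simp] theorem zero_left (j : ℕ) : growthDiagram A 0 j = 0 := by
  simp [growthDiagram]

@[simp] theorem zero_right (i : ℕ) : growthDiagram A i 0 = 0 := by
  cases i <;> simp [growthDiagram]

theorem succ_succ (i j : ℕ) :
    growthDiagram A (i + 1) (j + 1) = growth (growthDiagram A i j) (growthDiagram A i (j + 1))
      (growthDiagram A (i + 1) j) (A i j) := by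
  simp [growthDiagram]

theorem isHorizStrip (i j : ℕ) :
    IsHorizStrip (growthDiagram A i j) (growthDiagram A i (j + 1)) ∧
      IsHorizStrip (growthDiagram A i j) (growthDiagram A (i + 1) j) := by
  constructor
  · cases i with
    | zero => simpa using IsHorizStrip.zero
    | succ i =>
      rw [succ_succ]
      exact (isHorizStrip i j).1.growth_right (isHorizStrip i j).2 _
  · cases j with
    | zero => simpa using IsHorizStrip.zero
    | succ j =>
      rw [succ_succ]
      exact (isHorizStrip i j).1.growth_left (isHorizStrip i j).2 _
termination_by i + j

theorem antitone (i j : ℕ) : Antitone (growthDiagram A i j) := by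
  cases j with
  | zero => simp only [zero_right]; exact fun _ _ _ => le_rfl
  | succ j => exact (isHorizStrip A i j).1.antitone_right

theorem eq_zero_of_le {i j k : ℕ} (hjk : j ≤ k) : growthDiagram A i j k = 0 := by
  match i, j, k with
  | 0, _, _ => simp
  | _, 0, _ => simp
  | i + 1, j + 1, k + 1 =>
    have := ((isHorizStrip A (i + 1) j).1).interlace k
    have := eq_zero_of_le (i := i + 1) (j := j) (k := k) (by omega)
    omega

theorem congr {A B : ℕ → ℕ → ℕ} {i j : ℕ} (h : ∀ p < i, ∀ q < j, A p q = B p q) :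
    growthDiagram A i j = growthDiagram B i j := by
  match i, j with
  | 0, _ => simp
  | _ + 1, 0 => simp
  | i + 1, j + 1 =>
    rw [succ_succ, succ_succ, congr fun p hp q hq => h p (by omega) q (by omega),
      congr fun p hp q hq => h p (by omega) q hq, congr fun p hp q hq => h p hp q (by omega),
      h i (by omega) j (by omega)]

theorem symm {A : ℕ → ℕ → ℕ} (hA : ∀ p q, A p q = A q p) (i j : ℕ) :
    growthDiagram A i j = growthDiagram A j i := by
  match i, j with
  | 0, _ => simp
  | _ + 1, 0 => simp
  | i + 1, j + 1 =>
    rw [succ_succ, succ_succ, symm hA i j, symm hA i (j + 1), symm hA (i + 1) j, hA, growth_comm]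

theorem sum_eq_sum_sum {N : ℕ} (i j : ℕ) (hj : j ≤ N) :
    ∑ k ∈ range N, growthDiagram A i j k = ∑ p ∈ range i, ∑ q ∈ range j, A p q := by
  match i, j with
  | 0, _ => simp
  | _ + 1, 0 => simp
  | i + 1, j + 1 =>
    obtain ⟨hμ, hν⟩ := isHorizStrip A i j
    have hgrowth := sum_growth_add_sum hμ hν (A i j) (eq_zero_of_le A hj)
      (eq_zero_of_le A (k := N) (by omega))
    simp only [← succ_succ, sum_range_succ _ N, eq_zero_of_le A hj,
      eq_zero_of_le A (show j ≤ N by omega), add_zero] at hgrowth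
    rw [sum_eq_sum_sum i j (by omega), sum_eq_sum_sum i (j + 1) hj,
      sum_eq_sum_sum (i + 1) j (by omega)] at hgrowth
    simp only [sum_range_succ] at hgrowth ⊢
    rw [sum_add_distrib] at hgrowth ⊢
    omega

theorem sum_succ_right {n j : ℕ} (hj : j < n) :
    ∑ k ∈ range n, growthDiagram A n (j + 1) k =
      ∑ k ∈ range n, growthDiagram A n j k + ∑ p ∈ range n, A p j := by
  simp only [sum_eq_sum_sum A n _ hj, sum_eq_sum_sum A n _ hj.le, sum_range_succ,
    sum_add_distrib]

end growthDiagram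

structure IsStripChain (n : ℕ) (c : ℕ → ℕ → ℕ) : Prop where
  zero : c 0 = 0
  strip : ∀ j, IsHorizStrip (c j) (c (j + 1))
  stable : ∀ j, n ≤ j → c j = c n

namespace IsStripChain

variable {n : ℕ} {c : ℕ → ℕ → ℕ}

theorem antitone (hc : IsStripChain n c) (j : ℕ) : Antitone (c j) := by
  cases j with
  | zero => rw [hc.zero]; exact fun _ _ _ => le_rfl
  | succ j => exact (hc.strip j).antitone_right

theorem isHorizStrip_self (hc : IsStripChain n c) (j : ℕ) : IsHorizStrip (c j) (c j) :=
  .refl_of_antitone (hc.antitone j)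

end IsStripChain

-- The growth diagram rebuilt by the inverse local rule from `c`, placed both on the row `i = n`
-- and on the column `j = n`.
def backDiagram (n : ℕ) (c : ℕ → ℕ → ℕ) (i j : ℕ) : ℕ → ℕ :=
  if n ≤ i then c j
  else if n ≤ j then c i
  else growthInvShape (backDiagram n c (i + 1) (j + 1)) (backDiagram n c i (j + 1))
    (backDiagram n c (i + 1) j)
termination_by (n - i) + (n - j)

namespace backDiagram

variable {n : ℕ} {c : ℕ → ℕ → ℕ} {i j : ℕ}

theorem of_le_left (hi : n ≤ i) : backDiagram n c i j = c j := by
  rw [backDiagram, if_pos hi]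

theorem of_le_right (hi : i < n) (hj : n ≤ j) : backDiagram n c i j = c i := by
  rw [backDiagram, if_neg hi.not_ge, if_pos hj]

theorem of_lt (hi : i < n) (hj : j < n) : backDiagram n c i j =
    growthInvShape (backDiagram n c (i + 1) (j + 1)) (backDiagram n c i (j + 1))
      (backDiagram n c (i + 1) j) := by
  rw [backDiagram, if_neg hi.not_ge, if_neg hj.not_ge]

theorem isHorizStrip (hc : IsStripChain n c) (i j : ℕ) :
    IsHorizStrip (backDiagram n c i j) (backDiagram n c i (j + 1)) ∧
      IsHorizStrip (backDiagram n c i j) (backDiagram n c (i + 1) j) := by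
  by_cases hi : n ≤ i
  · rw [of_le_left hi, of_le_left hi, of_le_left (by omega)]
    exact ⟨hc.strip j, hc.isHorizStrip_self j⟩
  by_cases hj : n ≤ j
  · rw [of_le_right (by omega) hj, of_le_right (by omega) (by omega)]
    refine ⟨hc.isHorizStrip_self i, ?_⟩
    rcases (show i + 1 = n ∨ i + 1 < n by omega) with hi' | hi'
    · rw [of_le_left hi'.ge, hc.stable j hj, ← hi']
      exact hc.strip i
    · rw [of_le_right hi' hj]
      exact hc.strip i
  rw [of_lt (by omega) (by omega)]
  have hμ := (isHorizStrip hc i (j + 1)).2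
  have hν := (isHorizStrip hc (i + 1) j).1
  exact ⟨hμ.growthInvShape_left hν, hμ.growthInvShape_right hν⟩
termination_by (n - i) + (n - j)

theorem symm (hc : IsStripChain n c) (i j : ℕ) : backDiagram n c i j = backDiagram n c j i := by
  by_cases hi : n ≤ i <;> by_cases hj : n ≤ j
  · rw [of_le_left hi, of_le_left hj, hc.stable i hi, hc.stable j hj]
  · rw [of_le_left hi, of_le_right (by omega) hi]
  · rw [of_le_left hj, of_le_right (by omega) hj]
  · rw [of_lt (by omega) (by omega), of_lt (i := j) (by omega) (by omega),
      symm hc (i + 1) (j + 1), symm hc i (j + 1), symm hc (i + 1) j, growthInvShape_comm]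
termination_by (n - i) + (n - j)

theorem zero_right (hc : IsStripChain n c) (i : ℕ) : backDiagram n c i 0 = 0 := by
  by_cases hi : n ≤ i
  · rw [of_le_left hi, hc.zero]
  · rw [of_lt (by omega) (by omega), zero_right hc (i + 1)]
    funext k
    simp [growthInvShape]
termination_by n - i

theorem zero_left (hc : IsStripChain n c) (j : ℕ) : backDiagram n c 0 j = 0 := by
  rw [symm hc, zero_right hc]

end backDiagram

def matrixOfChain (n : ℕ) (c : ℕ → ℕ → ℕ) (i j : ℕ) : ℕ :=
  growthInvEntry (backDiagram n c (i + 1) (j + 1)) (backDiagram n c i (j + 1))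
    (backDiagram n c (i + 1) j)

def chainOfMatrix (n : ℕ) (A : ℕ → ℕ → ℕ) (j : ℕ) : ℕ → ℕ := growthDiagram A n (min j n)

section RoundTrips

variable {n : ℕ}

theorem growthDiagram_matrixOfChain {c : ℕ → ℕ → ℕ} (hc : IsStripChain n c) {i j : ℕ}
    (hi : i ≤ n) (hj : j ≤ n) : growthDiagram (matrixOfChain n c) i j = backDiagram n c i j := by
  match i, j with
  | 0, _ => rw [growthDiagram.zero_left, backDiagram.zero_left hc]
  | _ + 1, 0 => rw [growthDiagram.zero_right, backDiagram.zero_right hc]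
  | i + 1, j + 1 =>
    rw [growthDiagram.succ_succ, growthDiagram_matrixOfChain hc (by omega) (by omega),
      growthDiagram_matrixOfChain hc (by omega) hj, growthDiagram_matrixOfChain hc hi (by omega),
      backDiagram.of_lt (i := i) (by omega) (by omega)]
    exact growth_growthInv (backDiagram.isHorizStrip hc i (j + 1)).2
      (backDiagram.isHorizStrip hc (i + 1) j).1

theorem matrixOfChain_symm {c : ℕ → ℕ → ℕ} (hc : IsStripChain n c) (i j : ℕ) :
    matrixOfChain n c i j = matrixOfChain n c j i := by
  rw [matrixOfChain, matrixOfChain, backDiagram.symm hc (i + 1), backDiagram.symm hc i,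
    backDiagram.symm hc (i + 1) j, growthInvEntry_comm]

theorem chainOfMatrix_of_le (A : ℕ → ℕ → ℕ) {j : ℕ} (hj : j ≤ n) :
    chainOfMatrix n A j = growthDiagram A n j := by
  rw [chainOfMatrix, min_eq_left hj]

theorem isStripChain_chainOfMatrix (A : ℕ → ℕ → ℕ) : IsStripChain n (chainOfMatrix n A) where
  zero := by simp [chainOfMatrix]
  strip j := by
    by_cases hj : j < n
    · rw [chainOfMatrix_of_le A hj.le, chainOfMatrix_of_le A hj]
      exact (growthDiagram.isHorizStrip A n j).1
    · simp only [chainOfMatrix, min_eq_right (not_lt.1 hj), min_eq_right (by omega : n ≤ j + 1)]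
      exact .refl_of_antitone (growthDiagram.antitone A n n)
  stable j hj := by simp only [chainOfMatrix, min_eq_right hj, min_self]

theorem backDiagram_chainOfMatrix {A : ℕ → ℕ → ℕ} (hA : ∀ p q, A p q = A q p) {i j : ℕ}
    (hi : i ≤ n) (hj : j ≤ n) : backDiagram n (chainOfMatrix n A) i j = growthDiagram A i j := by
  by_cases hni : n ≤ i
  · rw [backDiagram.of_le_left hni, chainOfMatrix_of_le A hj, le_antisymm hi hni]
  by_cases hnj : n ≤ j
  · rw [backDiagram.of_le_right (by omega) hnj, chainOfMatrix_of_le A hi, le_antisymm hj hnj,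
      growthDiagram.symm hA]
  rw [backDiagram.of_lt (by omega) (by omega), backDiagram_chainOfMatrix hA (by omega) (by omega),
    backDiagram_chainOfMatrix hA hi (by omega), backDiagram_chainOfMatrix hA (by omega) hj,
    growthDiagram.succ_succ]
  exact growthInvShape_growth (growthDiagram.isHorizStrip A i j).1
    (growthDiagram.isHorizStrip A i j).2 _
termination_by (n - i) + (n - j)

theorem matrixOfChain_chainOfMatrix {A : ℕ → ℕ → ℕ} (hA : ∀ p q, A p q = A q p) {i j : ℕ}
    (hi : i < n) (hj : j < n) : matrixOfChain n (chainOfMatrix n A) i j = A i j := by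
  rw [matrixOfChain, backDiagram_chainOfMatrix hA hi hj, backDiagram_chainOfMatrix hA hi.le hj,
    backDiagram_chainOfMatrix hA hi hj.le, growthDiagram.succ_succ, growthInvEntry_growth]

end RoundTrips

def StripChain (n m : ℕ) : Type :=
  {c : ℕ → ℕ → ℕ // IsStripChain n c ∧
    ∀ j < n, ∑ k ∈ range n, c (j + 1) k = ∑ k ∈ range n, c j k + m}

theorem StripChain.ext {n m : ℕ} {c c' : StripChain n m} (h : ∀ j ≤ n, c.1 j = c'.1 j) :
    c = c' := by
  apply Subtype.ext
  funext j
  rcases le_total j n with hj | hj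
  · exact h j hj
  · rw [c.2.1.stable j hj, c'.2.1.stable j hj, h n le_rfl]

def SymmetricLineSumMatrix (n m : ℕ) : Type :=
  {A : Matrix (Fin n) (Fin n) ℕ // ((∀ i, ∑ j, A i j = m) ∧ (∀ j, ∑ i, A i j = m)) ∧ A = Aᵀ}

def Matrix.extendByZero {n : ℕ} (A : Matrix (Fin n) (Fin n) ℕ) (p q : ℕ) : ℕ :=
  if h : p < n ∧ q < n then A ⟨p, h.1⟩ ⟨q, h.2⟩ else 0

section MatrixChain

variable {n m : ℕ}

theorem Matrix.extendByZero_symm {A : Matrix (Fin n) (Fin n) ℕ} (hA : A = Aᵀ) (p q : ℕ) :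
    A.extendByZero p q = A.extendByZero q p := by
  unfold Matrix.extendByZero
  by_cases h : p < n ∧ q < n
  · rw [dif_pos h, dif_pos h.symm]; exact congrFun (congrFun hA _) _
  · rw [dif_neg h, dif_neg (mt And.symm h)]

theorem Matrix.sum_extendByZero_col (A : Matrix (Fin n) (Fin n) ℕ) {q : ℕ} (hq : q < n) :
    ∑ p ∈ range n, A.extendByZero p q = ∑ p, A p ⟨q, hq⟩ := by
  rw [← Fin.sum_univ_eq_sum_range]
  exact sum_congr rfl fun p _ => dif_pos ⟨p.isLt, hq⟩

def SymmetricLineSumMatrix.toStripChain (A : SymmetricLineSumMatrix n m) : StripChain n m :=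
  ⟨chainOfMatrix n A.1.extendByZero, isStripChain_chainOfMatrix _, fun j hj => by
    rw [chainOfMatrix_of_le _ hj, chainOfMatrix_of_le _ hj.le, growthDiagram.sum_succ_right _ hj,
      Matrix.sum_extendByZero_col _ hj, A.2.1.2]⟩

theorem StripChain.sum_matrixOfChain_col (c : StripChain n m) {j : ℕ} (hj : j < n) :
    ∑ p ∈ range n, matrixOfChain n c.1 p j = m := by
  have h := growthDiagram.sum_succ_right (matrixOfChain n c.1) hj
  rw [growthDiagram_matrixOfChain c.2.1 le_rfl hj, growthDiagram_matrixOfChain c.2.1 le_rfl hj.le,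
    backDiagram.of_le_left le_rfl, backDiagram.of_le_left le_rfl, c.2.2 j hj] at h
  omega

def StripChain.toMatrix (c : StripChain n m) : SymmetricLineSumMatrix n m :=
  ⟨Matrix.of fun i j => matrixOfChain n c.1 i j,
    ⟨fun i => by
      simp only [Matrix.of_apply, matrixOfChain_symm c.2.1 i]
      rw [Fin.sum_univ_eq_sum_range (matrixOfChain n c.1 · i)]
      exact c.sum_matrixOfChain_col i.isLt,
    fun j => by
      simp only [Matrix.of_apply]
      rw [Fin.sum_univ_eq_sum_range (matrixOfChain n c.1 · j)]
      exact c.sum_matrixOfChain_col j.isLt⟩,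
    Matrix.ext fun i j => matrixOfChain_symm c.2.1 i j⟩

def symmetricLineSumMatrixEquivStripChain (n m : ℕ) :
    SymmetricLineSumMatrix n m ≃ StripChain n m where
  toFun := SymmetricLineSumMatrix.toStripChain
  invFun := StripChain.toMatrix
  left_inv A := Subtype.ext <| Matrix.ext fun i j => by
    simp only [StripChain.toMatrix, SymmetricLineSumMatrix.toStripChain, Matrix.of_apply]
    rw [matrixOfChain_chainOfMatrix (Matrix.extendByZero_symm A.2.2) i.isLt j.isLt,
      Matrix.extendByZero, dif_pos ⟨i.isLt, j.isLt⟩]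
  right_inv c := StripChain.ext fun j hj => by
    simp only [StripChain.toMatrix, SymmetricLineSumMatrix.toStripChain]
    rw [chainOfMatrix_of_le _ hj, growthDiagram.congr (B := matrixOfChain n c.1)
      fun p hp q hq => dif_pos ⟨hp, by omega⟩, growthDiagram_matrixOfChain c.2.1 le_rfl hj,
      backDiagram.of_le_left le_rfl]

end MatrixChain

theorem lt_card_filter_range_iff {P : ℕ → Prop} [DecidablePred P] {N : ℕ}
    (hP : ∀ a b, a ≤ b → b < N → P b → P a) {j : ℕ} :
    j < #{x ∈ range N | P x} ↔ j < N ∧ P j := by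
  constructor
  · intro hj
    by_contra hPj
    have hsub : {x ∈ range N | P x} ⊆ range j := fun x hx => by
      simp only [mem_filter, mem_range] at hx ⊢
      by_contra hxj
      exact hPj ⟨by omega, hP j x (by omega) hx.1 hx.2⟩
    have := card_le_card hsub
    rw [card_range] at this
    omega
  · rintro ⟨hjN, hPj⟩
    have hsub : range (j + 1) ⊆ {x ∈ range N | P x} := fun x hx => by
      simp only [mem_filter, mem_range] at hx ⊢
      exact ⟨by omega, hP x j (by omega) hjN hPj⟩
    have := card_le_card hsub
    rw [card_range] at this
    omega

theorem card_filter_lt_add_one {α : Type*} [DecidableEq α] (s : Finset α) (f : α → ℕ) (k : ℕ) :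
    #{x ∈ s | f x < k + 1} = #{x ∈ s | f x < k} + #{x ∈ s | f x = k} := by
  rw [← card_union_of_disjoint (disjoint_filter.2 fun _ _ h => h.ne), ← filter_or]
  congr 1
  exact filter_congr fun _ _ => Nat.lt_succ_iff_lt_or_eq

namespace YoungDiagram

def ofRowLenFn (f : ℕ → ℕ) (hf : Antitone f) (N : ℕ) : YoungDiagram where
  cells := {p ∈ range N ×ˢ range (f 0) | p.2 < f p.1}
  isLowerSet := by
    rintro ⟨i, j⟩ ⟨i', j'⟩ ⟨hi, hj⟩ hmem
    simp only [coe_filter, mem_product, mem_range, Set.mem_ofPred_eq] at hmem ⊢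
    dsimp only at hi hj hmem ⊢
    have := hf hi
    have := hf (Nat.zero_le i')
    omega

theorem mem_ofRowLenFn {f : ℕ → ℕ} {hf : Antitone f} {N i j : ℕ} :
    (i, j) ∈ ofRowLenFn f hf N ↔ i < N ∧ j < f i := by
  rw [← mem_cells]
  simp only [ofRowLenFn, mem_filter, mem_product, mem_range]
  have := hf (Nat.zero_le i)
  omega

end YoungDiagram

namespace SemistandardYoungTableau

variable {ν : YoungDiagram} (T : SemistandardYoungTableau ν)

-- Row `i` of the shape formed by the entries `< t`.
def shapeChain (t i : ℕ) : ℕ := #{j ∈ range (ν.rowLen i) | T i j < t}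

theorem lt_shapeChain_iff {t i j : ℕ} : j < T.shapeChain t i ↔ (i, j) ∈ ν ∧ T i j < t := by
  rw [shapeChain, lt_card_filter_range_iff, YoungDiagram.mem_iff_lt_rowLen]
  intro a b hab hb hTb
  exact (T.row_weak_of_le hab (YoungDiagram.mem_iff_lt_rowLen.2 hb)).trans_lt hTb

theorem sum_shapeChain {N : ℕ} (hN : ∀ i j, (i, j) ∈ ν → i < N) (t : ℕ) :
    ∑ i ∈ range N, T.shapeChain t i = #{p ∈ ν.cells | T p.1 p.2 < t} := by
  rw [card_eq_sum_card_fiberwise (f := Prod.fst) (t := range N)]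
  · refine sum_congr rfl fun i _ => ?_
    rw [shapeChain, filter_filter]
    refine card_nbij' (fun j => (i, j)) Prod.snd ?_ ?_ (fun _ _ => rfl) ?_
    · intro j hj
      simp_all [YoungDiagram.mem_iff_lt_rowLen]
    · rintro ⟨i', j⟩ hp
      simp only [coe_filter, Set.mem_ofPred_eq, YoungDiagram.mem_cells] at hp
      obtain ⟨hmem, hT, rfl⟩ := hp
      simpa [← YoungDiagram.mem_iff_lt_rowLen] using ⟨hmem, hT⟩
    · rintro ⟨i', j⟩ hp
      simp_all
  · intro p hp
    simp only [coe_filter, Set.mem_ofPred_eq, YoungDiagram.mem_cells] at hp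
    exact mem_range.2 (hN p.1 p.2 hp.1)

theorem le_entry {i j : ℕ} (hij : (i, j) ∈ ν) : i ≤ T i j := by
  induction i with
  | zero => exact Nat.zero_le _
  | succ i ih =>
    have := ih (ν.up_left_mem i.le_succ le_rfl hij)
    have := T.col_strict (Nat.lt_add_one i) hij
    omega

theorem isStripChain_shapeChain {n : ℕ} (hT : ∀ i j, (i, j) ∈ ν → T i j < n) :
    IsStripChain n T.shapeChain where
  zero := by
    funext i
    simp [shapeChain]
  strip t := by
    refine ⟨fun i => le_of_forall_lt fun j hj => ?_, fun i => le_of_forall_lt fun j hj => ?_⟩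
    · rw [lt_shapeChain_iff] at hj ⊢
      exact ⟨hj.1, hj.2.trans t.lt_succ_self⟩
    · rw [lt_shapeChain_iff] at hj ⊢
      exact ⟨ν.up_left_mem i.le_succ le_rfl hj.1,
        (T.col_strict i.lt_succ_self hj.1).trans_le (Nat.lt_succ_iff.1 hj.2)⟩
  stable t ht := by
    funext i
    refine eq_of_forall_lt_iff fun j => ?_
    simp only [lt_shapeChain_iff]
    exact ⟨fun h => ⟨h.1, hT i j h.1⟩, fun h => ⟨h.1, (hT i j h.1).trans_le ht⟩⟩

end SemistandardYoungTableau

-- `(i, j)` enters the chain at step `chainEntry c i j + 1`.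
open Classical in
noncomputable def chainEntry (c : ℕ → ℕ → ℕ) (i j : ℕ) : ℕ :=
  if h : ∃ t, j < c (t + 1) i then Nat.find h else 0

namespace IsStripChain

variable {n : ℕ} {c : ℕ → ℕ → ℕ} (hc : IsStripChain n c)
include hc

theorem monotone (i : ℕ) : Monotone (c · i) :=
  monotone_nat_of_le_succ fun t => (hc.strip t).le i

theorem le_stable (t i : ℕ) : c t i ≤ c n i := by
  rcases le_total t n with ht | ht
  · exact hc.monotone i ht
  · rw [hc.stable t ht]

theorem interlace {i₁ i₂ : ℕ} (hi : i₁ < i₂) (t : ℕ) : c (t + 1) i₂ ≤ c t i₁ :=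
  (hc.antitone (t + 1) hi).trans ((hc.strip t).interlace i₁)

theorem eq_zero_of_le {t i : ℕ} (hti : t ≤ i) : c t i = 0 := by
  induction t generalizing i with
  | zero => rw [hc.zero]; rfl
  | succ t ih =>
    obtain ⟨i, rfl⟩ : ∃ i', i = i' + 1 := ⟨i - 1, by omega⟩
    have := (hc.strip t).interlace i
    have := ih (i := i) (by omega)
    omega

theorem eq_zero_of_stable_le {t i : ℕ} (hi : n ≤ i) : c t i = 0 :=
  Nat.eq_zero_of_le_zero ((hc.le_stable t i).trans (hc.eq_zero_of_le hi).le)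

def shape : YoungDiagram := .ofRowLenFn (c n) (hc.antitone n) n

theorem mem_shape {i j : ℕ} : (i, j) ∈ hc.shape ↔ j < c n i := by
  rw [shape, YoungDiagram.mem_ofRowLenFn]
  constructor
  · exact And.right
  · intro h
    refine ⟨?_, h⟩
    by_contra hi
    rw [hc.eq_zero_of_le (not_lt.1 hi)] at h
    exact Nat.not_lt_zero _ h

theorem chainEntry_lt_iff {i j : ℕ} (hij : (i, j) ∈ hc.shape) (t : ℕ) :
    chainEntry c i j < t ↔ j < c t i := by
  rw [mem_shape] at hij
  rw [chainEntry, dif_pos ⟨n, by rwa [hc.stable (n + 1) n.le_succ]⟩, Nat.find_lt_iff]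
  constructor
  · rintro ⟨s, hst, hs⟩
    exact hs.trans_le (hc.monotone i hst)
  · intro ht
    obtain ⟨s, rfl⟩ : ∃ s, t = s + 1 := ⟨t - 1, by
      have : t ≠ 0 := by rintro rfl; simp [hc.zero] at ht
      omega⟩
    exact ⟨s, s.lt_succ_self, ht⟩

theorem chainEntry_of_notMem {i j : ℕ} (hij : (i, j) ∉ hc.shape) : chainEntry c i j = 0 := by
  rw [mem_shape, not_lt] at hij
  rw [chainEntry, dif_neg]
  rintro ⟨t, ht⟩
  exact (ht.trans_le (hc.le_stable (t + 1) i)).not_ge hij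

noncomputable def tableau : SemistandardYoungTableau hc.shape where
  entry := chainEntry c
  row_weak' {i j₁ j₂} hj hcell := by
    rw [← Nat.lt_succ_iff, hc.chainEntry_lt_iff (hc.shape.up_left_mem le_rfl hj.le hcell)]
    exact hj.trans ((hc.chainEntry_lt_iff hcell _).1 (Nat.lt_succ_self _))
  col_strict' {i₁ i₂ j} hi hcell := by
    rw [hc.chainEntry_lt_iff (hc.shape.up_left_mem hi.le le_rfl hcell)]
    exact ((hc.chainEntry_lt_iff hcell _).1 (Nat.lt_succ_self _)).trans_le (hc.interlace hi _)
  zeros' hcell := hc.chainEntry_of_notMem hcell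

theorem shapeChain_tableau : hc.tableau.shapeChain = c := by
  funext t i
  refine eq_of_forall_lt_iff fun j => ?_
  rw [SemistandardYoungTableau.lt_shapeChain_iff]
  constructor
  · rintro ⟨hij, ht⟩
    exact (hc.chainEntry_lt_iff hij t).1 ht
  · intro hj
    have hij : (i, j) ∈ hc.shape := hc.mem_shape.2 (hj.trans_le (hc.le_stable t i))
    exact ⟨hij, (hc.chainEntry_lt_iff hij t).2 hj⟩

theorem sum_eq_card_tableau_lt (t : ℕ) :
    ∑ i ∈ range n, c t i = #{p ∈ hc.shape.cells | hc.tableau p.1 p.2 < t} := by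
  rw [← hc.tableau.sum_shapeChain (N := n), hc.shapeChain_tableau]
  intro i j hij
  by_contra hi
  rw [hc.mem_shape, hc.eq_zero_of_stable_le (not_lt.1 hi)] at hij
  exact Nat.not_lt_zero _ hij

end IsStripChain

def ContentTableau (n m : ℕ) : Type :=
  (ν : {ν : YoungDiagram // ν.card = n * m}) ×
    {T : SemistandardYoungTableau ν.1 //
      ∀ k : ℕ, (ν.1.cells.filter fun c => T c.1 c.2 = k).card = if k < n then m else 0}

theorem ContentTableau.ext {n m : ℕ} {X Y : ContentTableau n m} (hshape : X.1.1 = Y.1.1)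
    (hentry : ∀ i j, X.2.1 i j = Y.2.1 i j) : X = Y := by
  obtain ⟨⟨ν, hν⟩, T, hT⟩ := X
  obtain ⟨⟨ν', hν'⟩, T', hT'⟩ := Y
  subst hshape
  exact Sigma.ext rfl (heq_of_eq (Subtype.ext (SemistandardYoungTableau.ext hentry)))

namespace StripChain

variable {n m : ℕ} (c : StripChain n m)

theorem sum_eq_mul {t : ℕ} (ht : t ≤ n) : ∑ i ∈ range n, c.1 t i = t * m := by
  induction t with
  | zero => simp [c.2.1.zero]
  | succ t ih => rw [c.2.2 t ht, ih (by omega), add_mul, one_mul]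

theorem card_tableau_eq (k : ℕ) :
    #{p ∈ c.2.1.shape.cells | c.2.1.tableau p.1 p.2 = k} = if k < n then m else 0 := by
  have h := card_filter_lt_add_one c.2.1.shape.cells (fun p => c.2.1.tableau p.1 p.2) k
  rw [← c.2.1.sum_eq_card_tableau_lt, ← c.2.1.sum_eq_card_tableau_lt] at h
  split_ifs with hk
  · rw [c.2.2 k hk] at h
    omega
  · rw [c.2.1.stable (k + 1) (by omega), c.2.1.stable k (not_lt.1 hk)] at h
    omega

theorem card_shape : c.2.1.shape.card = n * m := by
  rw [← c.sum_eq_mul le_rfl, c.2.1.sum_eq_card_tableau_lt, YoungDiagram.card, filter_true_of_mem]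
  intro p hp
  exact (c.2.1.chainEntry_lt_iff hp n).2 (c.2.1.mem_shape.1 hp)

noncomputable def toContentTableau : ContentTableau n m :=
  ⟨⟨c.2.1.shape, c.card_shape⟩, c.2.1.tableau, c.card_tableau_eq⟩

end StripChain

namespace ContentTableau

variable {n m : ℕ} (X : ContentTableau n m)

theorem entry_lt {i j : ℕ} (hij : (i, j) ∈ X.1.1) : X.2.1 i j < n := by
  by_contra hn
  have h := X.2.2 (X.2.1 i j)
  rw [if_neg hn, card_eq_zero, filter_eq_empty_iff] at h
  exact h ((X.1.1.mem_cells _).2 hij) rfl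

theorem isStripChain : IsStripChain n X.2.1.shapeChain :=
  X.2.1.isStripChain_shapeChain fun _ _ => X.entry_lt

theorem sum_shapeChain_succ {t : ℕ} (ht : t < n) :
    ∑ i ∈ range n, X.2.1.shapeChain (t + 1) i = ∑ i ∈ range n, X.2.1.shapeChain t i + m := by
  have hrows : ∀ i j, (i, j) ∈ X.1.1 → i < n := fun i j hij =>
    (X.2.1.le_entry hij).trans_lt (X.entry_lt hij)
  rw [X.2.1.sum_shapeChain hrows, X.2.1.sum_shapeChain hrows, card_filter_lt_add_one, X.2.2 t,
    if_pos ht]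

def toStripChain : StripChain n m :=
  ⟨X.2.1.shapeChain, X.isStripChain, fun _ => X.sum_shapeChain_succ⟩

theorem shape_isStripChain : X.isStripChain.shape = X.1.1 := by
  ext ⟨i, j⟩
  rw [YoungDiagram.mem_cells, YoungDiagram.mem_cells, X.isStripChain.mem_shape,
    SemistandardYoungTableau.lt_shapeChain_iff]
  exact ⟨And.left, fun h => ⟨h, X.entry_lt h⟩⟩

theorem chainEntry_shapeChain (i j : ℕ) : chainEntry X.2.1.shapeChain i j = X.2.1 i j := by
  by_cases hij : (i, j) ∈ X.1.1
  · refine eq_of_forall_gt_iff fun t => ?_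
    rw [X.isStripChain.chainEntry_lt_iff (by rwa [shape_isStripChain]),
      SemistandardYoungTableau.lt_shapeChain_iff, and_iff_right hij]
  · rw [X.isStripChain.chainEntry_of_notMem (by rwa [shape_isStripChain]), X.2.1.zeros hij]

end ContentTableau

noncomputable def stripChainEquivContentTableau (n m : ℕ) :
    StripChain n m ≃ ContentTableau n m where
  toFun := StripChain.toContentTableau
  invFun := ContentTableau.toStripChain
  left_inv c := Subtype.ext c.2.1.shapeChain_tableau
  right_inv X := ContentTableau.ext X.shape_isStripChain X.chainEntry_shapeChain

theorem stmt19_general (n m : ℕ) :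
    Nat.card {A : Matrix (Fin n) (Fin n) ℕ //
        ((∀ i, ∑ j, A i j = m) ∧ (∀ j, ∑ i, A i j = m)) ∧ A = Aᵀ} =
      Nat.card ((ν : {ν : YoungDiagram // ν.card = n * m}) ×
        {T : SemistandardYoungTableau ν.1 //
          ∀ k : ℕ, (ν.1.cells.filter fun c => T c.1 c.2 = k).card =
            if k < n then m else 0}) :=
  Nat.card_congr ((symmetricLineSumMatrixEquivStripChain n m).trans
    (stripChainEquivContentTableau n m))

/-- the number of `n × n` symmetric non-negative integer matrices with all row
(and column) sums `m` equals the number of irreducible constituents, counted with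
multiplicity, of the character of `S_{nm}` induced from the trivial character of the Young
subgroup `S_m^n`; by Young's rule, the latter equals `Σ_{ν ⊢ nm} K_{ν, m^n}`, the total
number of semistandard Young tableaux with `nm` cells and content `m^n` (entries
`0, 1, …, n−1`, each occurring `m` times). -/
theorem stmt19 (n m : ℕ) (hn : 0 < n) (hm : 0 < m) :
    Nat.card {A : Matrix (Fin n) (Fin n) ℕ //
        ((∀ i, ∑ j, A i j = m) ∧ (∀ j, ∑ i, A i j = m)) ∧ A = Aᵀ} =
      Nat.card ((ν : {ν : YoungDiagram // ν.card = n * m}) ×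
        {T : SemistandardYoungTableau ν.1 //
          ∀ k : ℕ, (ν.1.cells.filter fun c => T c.1 c.2 = k).card =
            if k < n then m else 0}) :=
  stmt19_general n m
end
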